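/- arXiv:1907.12962 — 8 statements merged into one kernel-verified Lean document; each statement's English description precedes it below -/
import Mathlib

section
/- Let (ζ_i)_{i≥1} be any sequence in [0,1) and (γ_i)_{i≥1} any sequence in (1,∞). Set M_i := M(ζ_i,γ_i) and define the row vectors (L̃_1, R̃_1) := (1,1) and (L̃_k, R̃_k) := (1,1)·M_1·M_2⋯M_{k−1} for k ≥ 2. Then for every k ≥ 2 one has L̃_k > R̃_k > 0 and L̃_{k+1} + R̃_{k+1} > L̃_k + R̃_k. -/
open Matrix Filter

/-- The transfer matrix `M(ζ,γ) = (1/((1+ζ)γ)) · [[γ², ζγ²],[ζ, 1]]`. -/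
noncomputable def Mmat (ζ γ : ℝ) : Matrix (Fin 2) (Fin 2) ℝ :=
  (((1 + ζ) * γ)⁻¹) • !![γ ^ 2, ζ * γ ^ 2; ζ, 1]

/-- The forward product `M_1 · M_2 ⋯ M_{k-1}`. -/
noncomputable def forwardProd (ζ γ : ℕ → ℝ) (k : ℕ) : Matrix (Fin 2) (Fin 2) ℝ :=
  ((List.range (k - 1)).map (fun i => Mmat (ζ (i + 1)) (γ (i + 1)))).prod

/-- `L̃_k` : first entry of the row vector `(1,1) · M_1 ⋯ M_{k-1}`. -/
noncomputable def Ltil (ζ γ : ℕ → ℝ) (k : ℕ) : ℝ :=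
  Matrix.vecMul ![1, 1] (forwardProd ζ γ k) 0

/-- `R̃_k` : second entry of the row vector `(1,1) · M_1 ⋯ M_{k-1}`. -/
noncomputable def Rtil (ζ γ : ℕ → ℝ) (k : ℕ) : ℝ :=
  Matrix.vecMul ![1, 1] (forwardProd ζ γ k) 1

/-!
With `(L, R)` the current row vector and `(L', R') = (L, R) · M(ζ, γ)`, one computes
`L' + R' = γ L + R / γ` and `L' - R' = (1 - ζ)(γ² L - R) / ((1 + ζ) γ)`.
So if `0 < R ≤ L`, then `0 < R' < L'` and `L' + R' - (L + R) = (γ - 1)(γ L - R) / γ > 0`.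
The invariant `0 < R ≤ L` holds for `(1, 1)`, hence along the whole product.
-/

section Step

variable (v : Fin 2 → ℝ) (ζ γ : ℝ)

theorem vecMul_Mmat_apply_zero :
    (v ᵥ* Mmat ζ γ) 0 = ((1 + ζ) * γ)⁻¹ * (v 0 * γ ^ 2 + v 1 * ζ) := by
  simp [Mmat, vecMul, dotProduct, Fin.sum_univ_two]
  ring

theorem vecMul_Mmat_apply_one :
    (v ᵥ* Mmat ζ γ) 1 = ((1 + ζ) * γ)⁻¹ * (v 0 * (ζ * γ ^ 2) + v 1) := by
  simp [Mmat, vecMul, dotProduct, Fin.sum_univ_two]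
  ring

variable {ζ γ}

theorem vecMul_Mmat_sum (hζ : 1 + ζ ≠ 0) (hγ : γ ≠ 0) :
    (v ᵥ* Mmat ζ γ) 0 + (v ᵥ* Mmat ζ γ) 1 = γ * v 0 + v 1 / γ := by
  rw [vecMul_Mmat_apply_zero, vecMul_Mmat_apply_one]
  field_simp
  ring

theorem vecMul_Mmat_sub (hζ : 1 + ζ ≠ 0) (hγ : γ ≠ 0) :
    (v ᵥ* Mmat ζ γ) 0 - (v ᵥ* Mmat ζ γ) 1
      = (1 - ζ) * (γ ^ 2 * v 0 - v 1) / ((1 + ζ) * γ) := by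
  rw [vecMul_Mmat_apply_zero, vecMul_Mmat_apply_one]
  field_simp
  ring

theorem vecMul_Mmat_invariant (hζ₀ : 0 ≤ ζ) (hζ₁ : ζ < 1) (hγ : 1 < γ)
    (hv₁ : 0 < v 1) (hv : v 1 ≤ v 0) :
    (v ᵥ* Mmat ζ γ) 1 < (v ᵥ* Mmat ζ γ) 0 ∧ 0 < (v ᵥ* Mmat ζ γ) 1 ∧
      v 0 + v 1 < (v ᵥ* Mmat ζ γ) 0 + (v ᵥ* Mmat ζ γ) 1 := by
  have hγ₀ : 0 < γ := by linarith
  have hζ' : 1 + ζ ≠ 0 := by linarith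
  have hγv : v 1 < γ * v 0 := by nlinarith
  refine ⟨?_, ?_, ?_⟩
  · have hpos : 0 < (1 - ζ) * (γ ^ 2 * v 0 - v 1) / ((1 + ζ) * γ) := by
      have : v 1 < γ ^ 2 * v 0 := by nlinarith
      apply div_pos <;> apply mul_pos <;> linarith
    linarith [vecMul_Mmat_sub v hζ' hγ₀.ne']
  · rw [vecMul_Mmat_apply_one]
    exact mul_pos (inv_pos.mpr (mul_pos (by linarith) hγ₀))
      (add_pos_of_nonneg_of_pos (mul_nonneg (by linarith) (mul_nonneg hζ₀ (sq_nonneg γ))) hv₁)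
  · rw [vecMul_Mmat_sum v hζ' hγ₀.ne', ← sub_pos]
    have : γ * v 0 + v 1 / γ - (v 0 + v 1) = (γ - 1) * (γ * v 0 - v 1) / γ := by
      field_simp
      ring
    rw [this]
    apply div_pos (mul_pos _ _) hγ₀ <;> linarith

end Step

theorem forwardProd_succ (ζ γ : ℕ → ℝ) {k : ℕ} (hk : 1 ≤ k) :
    forwardProd ζ γ (k + 1) = forwardProd ζ γ k * Mmat (ζ k) (γ k) := by
  obtain ⟨j, rfl⟩ := Nat.exists_eq_add_of_le' hk
  simp [forwardProd, List.range_succ]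

theorem vecMul_forwardProd_succ (ζ γ : ℕ → ℝ) {k : ℕ} (hk : 1 ≤ k) :
    ![1, 1] ᵥ* forwardProd ζ γ (k + 1) = (![1, 1] ᵥ* forwardProd ζ γ k) ᵥ* Mmat (ζ k) (γ k) := by
  rw [forwardProd_succ ζ γ hk, vecMul_vecMul]

/-- For any sequences `(ζ_i)_{i≥1} ⊆ [0,1)` and `(γ_i)_{i≥1} ⊆ (1,∞)`, the row vectors
`(L̃_k, R̃_k) = (1,1)·M_1⋯M_{k-1}` satisfy `L̃_k > R̃_k > 0` and
`L̃_{k+1} + R̃_{k+1} > L̃_k + R̃_k` for all `k ≥ 2`. -/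
theorem stmt0 (ζ γ : ℕ → ℝ)
    (hζ : ∀ i, 1 ≤ i → 0 ≤ ζ i ∧ ζ i < 1)
    (hγ : ∀ i, 1 ≤ i → 1 < γ i) :
    ∀ k, 2 ≤ k →
      Ltil ζ γ k > Rtil ζ γ k ∧ Rtil ζ γ k > 0 ∧
      Ltil ζ γ (k + 1) + Rtil ζ γ (k + 1) > Ltil ζ γ k + Rtil ζ γ k := by
  have step : ∀ k, 1 ≤ k → 0 < Rtil ζ γ k → Rtil ζ γ k ≤ Ltil ζ γ k →
      Rtil ζ γ (k + 1) < Ltil ζ γ (k + 1) ∧ 0 < Rtil ζ γ (k + 1) ∧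
        Ltil ζ γ k + Rtil ζ γ k < Ltil ζ γ (k + 1) + Rtil ζ γ (k + 1) := by
    intro k hk
    simp only [Ltil, Rtil, vecMul_forwardProd_succ ζ γ hk]
    exact vecMul_Mmat_invariant _ (hζ k hk).1 (hζ k hk).2 (hγ k hk)
  have invariant : ∀ k, 1 ≤ k → 0 < Rtil ζ γ k ∧ Rtil ζ γ k ≤ Ltil ζ γ k := by
    intro k hk
    induction k, hk using Nat.le_induction with
    | base => simp [Ltil, Rtil, forwardProd]
    | succ k hk ih =>
      obtain ⟨hLR, hR, -⟩ := step k hk ih.1 ih.2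
      exact ⟨hR, hLR.le⟩
  intro k hk
  obtain ⟨j, rfl⟩ := Nat.exists_eq_add_of_le' (by omega : 1 ≤ k)
  obtain ⟨hLR, hR, -⟩ := step j (by omega) (invariant j (by omega)).1 (invariant j (by omega)).2
  obtain ⟨-, -, hsum⟩ := step (j + 1) (by omega) hR hLR.le
  exact ⟨hLR, hR, hsum⟩
end

section
/- Fix ζ ∈ [0,1) and γ ∈ (1,∞), and define f(θ) := arctan( (ζγ² + tan θ)/(γ² + ζ·tan θ) ) for θ ∈ [0, π/4]. Let K := max{ γ²(1−ζ²) / ((ζ²+1)γ⁴), 2γ²(1−ζ²) / ((ζ²+1)(γ⁴+1) + 4ζγ²) }. Then K ∈ (0,1) and |f(θ₁) − f(θ₂)| ≤ K·|θ₁ − θ₂| for all θ₁, θ₂ ∈ [0, π/4]; that is, f is a strict contraction on [0, π/4] with explicit contraction constant K. -/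
open Real

/-- Fix `ζ ∈ [0,1)` and `γ ∈ (1,∞)` and let
`f(θ) = arctan((ζγ² + tan θ)/(γ² + ζ·tan θ))`.  With
`K = max{ γ²(1−ζ²)/((ζ²+1)γ⁴), 2γ²(1−ζ²)/((ζ²+1)(γ⁴+1) + 4ζγ²) }` one has `K ∈ (0,1)`
and `|f(θ₁) − f(θ₂)| ≤ K·|θ₁ − θ₂|` for all `θ₁, θ₂ ∈ [0, π/4]`. -/
theorem stmt2 (ζ γ : ℝ) (hζ0 : 0 ≤ ζ) (hζ1 : ζ < 1) (hγ : 1 < γ) :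
    let f : ℝ → ℝ := fun θ => arctan ((ζ * γ ^ 2 + tan θ) / (γ ^ 2 + ζ * tan θ))
    let K : ℝ := max (γ ^ 2 * (1 - ζ ^ 2) / ((ζ ^ 2 + 1) * γ ^ 4))
      (2 * γ ^ 2 * (1 - ζ ^ 2) / ((ζ ^ 2 + 1) * (γ ^ 4 + 1) + 4 * ζ * γ ^ 2))
    0 < K ∧ K < 1 ∧
      ∀ θ₁ ∈ Set.Icc 0 (π / 4), ∀ θ₂ ∈ Set.Icc 0 (π / 4),
        |f θ₁ - f θ₂| ≤ K * |θ₁ - θ₂| := by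
  intro f K
  have hγ0 : (0:ℝ) < γ := lt_trans one_pos hγ
  have hγ2 : (1:ℝ) < γ ^ 2 := by nlinarith
  have hγ2pos : (0:ℝ) < γ ^ 2 := by positivity
  have hζsq : ζ ^ 2 < 1 := by nlinarith
  have hA0 : (0:ℝ) < (ζ ^ 2 + 1) * γ ^ 4 := by positivity
  have hB0 : (0:ℝ) < (ζ ^ 2 + 1) * (γ ^ 4 + 1) + 4 * ζ * γ ^ 2 := by positivity
  -- K > 0
  have hKpos : 0 < K := by
    have : 0 < γ ^ 2 * (1 - ζ ^ 2) / ((ζ ^ 2 + 1) * γ ^ 4) := by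
      apply div_pos _ hA0; nlinarith
    exact lt_of_lt_of_le this (le_max_left _ _)
  -- K < 1
  have hKlt1 : K < 1 := by
    apply max_lt
    · rw [div_lt_one hA0]
      nlinarith [mul_lt_mul_of_pos_left hγ2 hγ2pos, mul_nonneg (sq_nonneg ζ) hγ2pos.le,
        mul_nonneg (sq_nonneg ζ) (mul_pos hγ2pos hγ2pos).le]
    · rw [div_lt_one hB0]; nlinarith [sq_nonneg (γ ^ 2 - 1), mul_nonneg hζ0 hγ2pos.le]
  refine ⟨hKpos, hKlt1, ?_⟩
  -- the two defining inequalities for K, in cleared form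
  have hKA : γ ^ 2 * (1 - ζ ^ 2) ≤ K * ((ζ ^ 2 + 1) * γ ^ 4) := by
    have := le_max_left (γ ^ 2 * (1 - ζ ^ 2) / ((ζ ^ 2 + 1) * γ ^ 4))
      (2 * γ ^ 2 * (1 - ζ ^ 2) / ((ζ ^ 2 + 1) * (γ ^ 4 + 1) + 4 * ζ * γ ^ 2))
    calc γ ^ 2 * (1 - ζ ^ 2)
        = γ ^ 2 * (1 - ζ ^ 2) / ((ζ ^ 2 + 1) * γ ^ 4) * ((ζ ^ 2 + 1) * γ ^ 4) := by
          field_simp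
      _ ≤ K * ((ζ ^ 2 + 1) * γ ^ 4) := by
          apply mul_le_mul_of_nonneg_right this hA0.le
  have hKB : 2 * γ ^ 2 * (1 - ζ ^ 2) ≤ K * ((ζ ^ 2 + 1) * (γ ^ 4 + 1) + 4 * ζ * γ ^ 2) := by
    have := le_max_right (γ ^ 2 * (1 - ζ ^ 2) / ((ζ ^ 2 + 1) * γ ^ 4))
      (2 * γ ^ 2 * (1 - ζ ^ 2) / ((ζ ^ 2 + 1) * (γ ^ 4 + 1) + 4 * ζ * γ ^ 2))
    calc 2 * γ ^ 2 * (1 - ζ ^ 2)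
        = 2 * γ ^ 2 * (1 - ζ ^ 2) / ((ζ ^ 2 + 1) * (γ ^ 4 + 1) + 4 * ζ * γ ^ 2) *
            ((ζ ^ 2 + 1) * (γ ^ 4 + 1) + 4 * ζ * γ ^ 2) := by field_simp
      _ ≤ K * ((ζ ^ 2 + 1) * (γ ^ 4 + 1) + 4 * ζ * γ ^ 2) := by
          apply mul_le_mul_of_nonneg_right this hB0.le
  -- setup for the mean value theorem
  set s : Set ℝ := Set.Icc 0 (π / 4) with hs
  have hπ : (0:ℝ) < π := pi_pos
  have hπ42 : π / 4 < π / 2 := by linarith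
  set f' : ℝ → ℝ := fun θ =>
    γ ^ 2 * (1 - ζ ^ 2) * (1 + tan θ ^ 2) /
      ((ζ ^ 2 + 1) * (γ ^ 4 + tan θ ^ 2) + 4 * ζ * γ ^ 2 * tan θ) with hf'
  -- basic facts for θ ∈ s
  have hcos : ∀ θ ∈ s, 0 < cos θ := by
    intro θ hθ
    apply Real.cos_pos_of_mem_Ioo
    constructor
    · linarith [hθ.1]
    · linarith [hθ.2]
  have htan0 : ∀ θ ∈ s, 0 ≤ tan θ := by
    intro θ hθ
    rw [Real.tan_eq_sin_div_cos]
    apply div_nonneg _ (hcos θ hθ).le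
    apply Real.sin_nonneg_of_nonneg_of_le_pi hθ.1
    linarith [hθ.2]
  have htan1 : ∀ θ ∈ s, tan θ ≤ 1 := by
    intro θ hθ
    have := Real.tan_pi_div_four
    rcases eq_or_lt_of_le hθ.2 with h | h
    · rw [h, this]
    · rw [← this]
      exact (Real.tan_lt_tan_of_lt_of_lt_pi_div_two (by linarith [hθ.1]) hπ42 h).le
  have hden : ∀ θ ∈ s, 0 < γ ^ 2 + ζ * tan θ := by
    intro θ hθ
    have := mul_nonneg hζ0 (htan0 θ hθ)
    linarith
  have hDen : ∀ θ ∈ s,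
      0 < (ζ ^ 2 + 1) * (γ ^ 4 + tan θ ^ 2) + 4 * ζ * γ ^ 2 * tan θ := by
    intro θ hθ
    have h1 : 0 ≤ 4 * ζ * γ ^ 2 * tan θ := by
      apply mul_nonneg _ (htan0 θ hθ); positivity
    nlinarith [sq_nonneg (tan θ)]
  -- derivative of f
  have hderiv : ∀ θ ∈ s, HasDerivWithinAt f (f' θ) s θ := by
    intro θ hθ
    have hc := (hcos θ hθ).ne'
    have hc2 : cos θ ^ 2 ≠ 0 := pow_ne_zero _ hc
    have hd := (hden θ hθ).ne'
    have h1 : HasDerivAt tan (1 / cos θ ^ 2) θ := Real.hasDerivAt_tan hc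
    have h2 : HasDerivAt (fun x => ζ * γ ^ 2 + tan x) (1 / cos θ ^ 2) θ := h1.const_add _
    have h3 : HasDerivAt (fun x => γ ^ 2 + ζ * tan x) (ζ * (1 / cos θ ^ 2)) θ :=
      (h1.const_mul ζ).const_add _
    have h4 := (h2.div h3 hd).arctan
    have htsq : 1 + tan θ ^ 2 = 1 / cos θ ^ 2 := by
      rw [Real.tan_eq_sin_div_cos]
      field_simp
      exact cos_sq_add_sin_sq θ
    have : (1 / (1 + ((ζ * γ ^ 2 + tan θ) / (γ ^ 2 + ζ * tan θ)) ^ 2) *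
        ((1 / cos θ ^ 2 * (γ ^ 2 + ζ * tan θ) -
          (ζ * γ ^ 2 + tan θ) * (ζ * (1 / cos θ ^ 2))) / (γ ^ 2 + ζ * tan θ) ^ 2)) = f' θ := by
      rw [hf']
      rw [← htsq]
      have hD := (hDen θ hθ).ne'
      field_simp
      rw [eq_div_iff (by convert hD using 1; ring)]
      ring
    rw [← this]
    exact h4.hasDerivWithinAt
  -- bound on the derivative
  have hbound : ∀ θ ∈ s, ‖f' θ‖ ≤ K := by
    intro θ hθ
    set t := tan θ with ht
    have ht0 := htan0 θ hθ
    have ht1 := htan1 θ hθ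
    have hD := hDen θ hθ
    have hnonneg : 0 ≤ f' θ := by
      rw [hf']
      apply div_nonneg _ hD.le
      have h12 : (0:ℝ) ≤ 1 - ζ ^ 2 := by nlinarith
      positivity
    rw [Real.norm_eq_abs, abs_of_nonneg hnonneg, hf']
    rw [div_le_iff₀ hD]
    rcases le_or_gt (K * (ζ ^ 2 + 1)) (γ ^ 2 * (1 - ζ ^ 2)) with hcase | hcase
    · nlinarith [mul_nonneg (mul_nonneg ht0 (sub_nonneg.2 ht1))
        (sub_nonneg.2 hcase), mul_nonneg hKpos.le (mul_nonneg (mul_nonneg hζ0 hγ2pos.le) ht0)]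
    · nlinarith [mul_nonneg (mul_nonneg (sub_nonneg.2 hcase.le) ht0) ht0,
        mul_nonneg hKpos.le (mul_nonneg (mul_nonneg hζ0 hγ2pos.le) ht0)]
  -- conclude by the mean value inequality
  intro θ₁ hθ₁ θ₂ hθ₂
  have := (convex_Icc (0:ℝ) (π / 4)).norm_image_sub_le_of_norm_hasDerivWithin_le
    hderiv hbound hθ₂ hθ₁
  simpa [Real.norm_eq_abs] using this
end

section
/- Let Z be a random variable with values in [0,1] and let (ζ, γ) be a random pair independent of Z with ζ ∈ [0,1) almost surely and γ ≥ γ₀ almost surely for some constant γ₀ > 1, such that Φ_{(ζ,γ)}(Z) has the same distribution as Z. Then E[Z] > 0 if and only if P(ζ > 0) > 0. In particular, if ζ = 0 almost surely then Z = 0 almost surely. -/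
open MeasureTheory ProbabilityTheory

/-- The Möbius transform `Φ_{(ζ,γ)}(z) = (ζγ² + z)/(γ² + ζz)`. -/
noncomputable def Phi (ζ γ z : ℝ) : ℝ := (ζ * γ ^ 2 + z) / (γ ^ 2 + ζ * z)

/-!
The law of `Z` is invariant under `Φ_{(ζ,γ)}`, so `E[Φ_{(ζ,γ)}(Z)] = E[Z]`, and since `Z ≥ 0`,
`E[Z] = 0` exactly when `Z = 0` a.s.  If `ζ = 0` a.s., then `Φ_{(ζ,γ)}(Z) = Z / γ² ≤ Z / γ₀²`
is a strict contraction in mean, forcing `E[Z] = 0`.  Conversely, if `Z = 0` a.s., then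
`Φ_{(ζ,γ)}(Z) = ζ`, so `ζ` has the law of `Z`, namely `δ₀`.
-/

lemma Phi_zero_left (γ z : ℝ) : Phi 0 γ z = z / γ ^ 2 := by
  simp [Phi]

lemma Phi_zero_right (ζ : ℝ) {γ : ℝ} (hγ : γ ≠ 0) : Phi ζ γ 0 = ζ := by
  simp [Phi, hγ]

lemma Measurable.Phi {α : Type*} [MeasurableSpace α] {f g h : α → ℝ} (hf : Measurable f)
    (hg : Measurable g) (hh : Measurable h) : Measurable fun a => _root_.Phi (f a) (g a) (h a) := by
  unfold _root_.Phi
  fun_prop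

section

variable {Ω : Type*} [MeasurableSpace Ω] {μ : Measure Ω}

lemma measure_setOf_pos_eq_zero_iff {f : Ω → ℝ} (hf : ∀ᵐ ω ∂μ, 0 ≤ f ω) :
    μ {ω | 0 < f ω} = 0 ↔ ∀ᵐ ω ∂μ, f ω = 0 := by
  simp only [← not_le]
  rw [← ae_iff]
  constructor
  · intro hle
    filter_upwards [hle, hf] with ω h₁ h₂ using le_antisymm h₁ h₂
  · intro h0
    filter_upwards [h0] with ω h using h.le

lemma integral_eq_zero_of_identDistrib_of_le_mul {X Y : Ω → ℝ} {c : ℝ}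
    (hXY : IdentDistrib Y X μ μ) (hX : Integrable X μ) (hX0 : ∀ᵐ ω ∂μ, 0 ≤ X ω) (hc : c < 1)
    (hle : ∀ᵐ ω ∂μ, Y ω ≤ c * X ω) : ∫ ω, X ω ∂μ = 0 := by
  have hmean : ∫ ω, X ω ∂μ ≤ c * ∫ ω, X ω ∂μ :=
    calc ∫ ω, X ω ∂μ = ∫ ω, Y ω ∂μ := hXY.integral_eq.symm
      _ ≤ ∫ ω, c * X ω ∂μ := integral_mono_ae (hXY.integrable_iff.mpr hX) (hX.const_mul c) hle
      _ = c * ∫ ω, X ω ∂μ := integral_const_mul c _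
  have hnonneg : 0 ≤ ∫ ω, X ω ∂μ := integral_nonneg_of_ae hX0
  nlinarith

variable {Z ζ γ : Ω → ℝ}

lemma ae_eq_zero_of_identDistrib_Phi {γ₀ : ℝ} (hγ₀ : 1 < γ₀) (hZ : Integrable Z μ)
    (hZ0 : ∀ᵐ ω ∂μ, 0 ≤ Z ω) (hγ : ∀ᵐ ω ∂μ, γ₀ ≤ γ ω)
    (hlaw : IdentDistrib (fun ω => Phi (ζ ω) (γ ω) (Z ω)) Z μ μ) (hζ : ∀ᵐ ω ∂μ, ζ ω = 0) :
    ∀ᵐ ω ∂μ, Z ω = 0 := by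
  have hcontract : ∀ᵐ ω ∂μ, Phi (ζ ω) (γ ω) (Z ω) ≤ (γ₀ ^ 2)⁻¹ * Z ω := by
    filter_upwards [hζ, hγ, hZ0] with ω hζω hγω hZω
    rw [hζω, Phi_zero_left, div_eq_inv_mul]
    gcongr
  have hc : (γ₀ ^ 2)⁻¹ < 1 := inv_lt_one_of_one_lt₀ (one_lt_pow₀ hγ₀ two_ne_zero)
  have hmean := integral_eq_zero_of_identDistrib_of_le_mul hlaw hZ hZ0 hc hcontract
  exact (integral_eq_zero_iff_of_nonneg_ae hZ0 hZ).mp hmean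

lemma ae_coef_eq_zero_of_identDistrib_Phi (hζ : Measurable ζ) (hγ : ∀ᵐ ω ∂μ, γ ω ≠ 0)
    (hlaw : IdentDistrib (fun ω => Phi (ζ ω) (γ ω) (Z ω)) Z μ μ) (hZ : ∀ᵐ ω ∂μ, Z ω = 0) :
    ∀ᵐ ω ∂μ, ζ ω = 0 := by
  have hPhi : (fun ω => Phi (ζ ω) (γ ω) (Z ω)) =ᵐ[μ] ζ := by
    filter_upwards [hZ, hγ] with ω hZω hγω
    rw [hZω, Phi_zero_right _ hγω]
  have hζlaw : IdentDistrib ζ Z μ μ :=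
    (IdentDistrib.of_ae_eq hζ.aemeasurable hPhi.symm).trans hlaw
  exact hζlaw.symm.ae_snd (measurableSet_singleton 0) hZ

end

theorem stmt5_general {Ω : Type*} [MeasurableSpace Ω] (μ : Measure Ω) [IsProbabilityMeasure μ]
    (Z ζ γ : Ω → ℝ) (γ₀ : ℝ) (hγ₀ : 1 < γ₀)
    (hZmeas : Measurable Z) (hpairmeas : Measurable (fun ω => (ζ ω, γ ω)))
    (hZrange : ∀ᵐ ω ∂μ, Z ω ∈ Set.Icc (0 : ℝ) 1)
    (hζrange : ∀ᵐ ω ∂μ, 0 ≤ ζ ω ∧ ζ ω < 1)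
    (hγrange : ∀ᵐ ω ∂μ, γ₀ ≤ γ ω)
    (hfix : Measure.map (fun ω => Phi (ζ ω) (γ ω) (Z ω)) μ = Measure.map Z μ) :
    ((0 < ∫ ω, Z ω ∂μ) ↔ 0 < μ {ω | 0 < ζ ω}) ∧
    ((∀ᵐ ω ∂μ, ζ ω = 0) → (∀ᵐ ω ∂μ, Z ω = 0)) := by
  have hζmeas : Measurable ζ := measurable_fst.comp hpairmeas
  have hγmeas : Measurable γ := measurable_snd.comp hpairmeas
  have hlaw : IdentDistrib (fun ω => Phi (ζ ω) (γ ω) (Z ω)) Z μ μ :=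
    ⟨(hζmeas.Phi hγmeas hZmeas).aemeasurable, hZmeas.aemeasurable, hfix⟩
  have hZ0 : ∀ᵐ ω ∂μ, 0 ≤ Z ω := hZrange.mono fun _ h => h.1
  have hZint : Integrable Z μ :=
    .of_bound hZmeas.aestronglyMeasurable 1 <| hZrange.mono fun _ h => by
      rw [Real.norm_eq_abs, abs_le]; exact ⟨by linarith [h.1], h.2⟩
  have hγ0 : ∀ᵐ ω ∂μ, γ ω ≠ 0 := hγrange.mono fun _ h => ne_of_gt (by linarith)
  have hZζ : (∀ᵐ ω ∂μ, Z ω = 0) ↔ ∀ᵐ ω ∂μ, ζ ω = 0 :=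
    ⟨ae_coef_eq_zero_of_identDistrib_Phi hζmeas hγ0 hlaw,
      ae_eq_zero_of_identDistrib_Phi hγ₀ hZint hZ0 hγrange hlaw⟩
  refine ⟨?_, hZζ.mpr⟩
  rw [(integral_nonneg_of_ae hZ0).lt_iff_ne', pos_iff_ne_zero, Ne, Ne,
    integral_eq_zero_iff_of_nonneg_ae hZ0 hZint,
    measure_setOf_pos_eq_zero_iff (hζrange.mono fun _ h => h.1)]
  exact not_congr hZζ

/-- Let `Z` be `[0,1]`-valued, let `(ζ, γ)` be independent of `Z` with `ζ ∈ [0,1)` a.s.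
and `γ ≥ γ₀ > 1` a.s., and suppose `Φ_{(ζ,γ)}(Z)` has the same law as `Z`.  Then
`E[Z] > 0` if and only if `P(ζ > 0) > 0`; in particular if `ζ = 0` a.s. then `Z = 0` a.s. -/
theorem stmt5 {Ω : Type*} [MeasurableSpace Ω] (μ : Measure Ω) [IsProbabilityMeasure μ]
    (Z ζ γ : Ω → ℝ) (γ₀ : ℝ) (hγ₀ : 1 < γ₀)
    (hZmeas : Measurable Z) (hpairmeas : Measurable (fun ω => (ζ ω, γ ω)))
    (hZrange : ∀ᵐ ω ∂μ, Z ω ∈ Set.Icc (0 : ℝ) 1)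
    (hζrange : ∀ᵐ ω ∂μ, 0 ≤ ζ ω ∧ ζ ω < 1)
    (hγrange : ∀ᵐ ω ∂μ, γ₀ ≤ γ ω)
    (hindep : IndepFun (fun ω => (ζ ω, γ ω)) Z μ)
    (hfix : Measure.map (fun ω => Phi (ζ ω) (γ ω) (Z ω)) μ = Measure.map Z μ) :
    ((0 < ∫ ω, Z ω ∂μ) ↔ 0 < μ {ω | 0 < ζ ω}) ∧
    ((∀ᵐ ω ∂μ, ζ ω = 0) → (∀ᵐ ω ∂μ, Z ω = 0)) :=
  stmt5_general μ Z ζ γ γ₀ hγ₀ hZmeas hpairmeas hZrange hζrange hγrange hfix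
end

section
/- Let λ > 0, 0 < ℓ̲ ≤ ℓ̄ < ∞ and let d̄ ≥ 2 be an integer. Let Z be a random variable with values in [0,1] and (ζ, γ) a random pair independent of Z with, almost surely, 0 ≤ ζ ≤ 1 − 2/d̄ and e^{ℓ̲·√(2λ)} ≤ γ ≤ e^{ℓ̄·√(2λ)}, such that Φ_{(ζ,γ)}(Z) has the same distribution as Z. Then, almost surely, Z ≤ 1 / (1 + (2/d̄)·(e^{2ℓ̲√(2λ)} − 1)/(e^{2ℓ̄√(2λ)} + 1)); equivalently, the random variable ξ := 1/Z (with 1/0 := +∞) satisfies ξ ≥ 1 + (2/d̄)·(e^{2ℓ̲√(2λ)} − 1)/(e^{2ℓ̄√(2λ)} + 1) almost surely. -/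
/-!
Every admissible `Φ_{(ζ,γ)}` maps `[0,1]` below the bound `M`: writing `t = γ²` and
`k = (A² - 1)/(B² + 1)`, one has `k (t + z) ≤ t - z` and `c ≤ 1 - ζ`, which together give
`(ζt + z)(1 + ck) ≤ t + ζz`. Hence `Φ_{(ζ,γ)}(Z) ≤ M` almost surely, and since `Z` has the
same law, `Z ≤ M` almost surely as well.
-/

open MeasureTheory ProbabilityTheory Real

theorem Phi_le_of_mem_Icc {A B c ζ γ z : ℝ} (hA : 1 ≤ A) (hAγ : A ≤ γ) (hγB : γ ≤ B)
    (hc : 0 ≤ c) (hζ : 0 ≤ ζ) (hζc : ζ ≤ 1 - c) (hz : z ∈ Set.Icc 0 1) :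
    Phi ζ γ z ≤ 1 / (1 + c * ((A ^ 2 - 1) / (B ^ 2 + 1))) := by
  obtain ⟨hz0, hz1⟩ := hz
  set k := (A ^ 2 - 1) / (B ^ 2 + 1)
  have hAt : A ^ 2 ≤ γ ^ 2 := pow_le_pow_left₀ (by linarith) hAγ 2
  have htB : γ ^ 2 ≤ B ^ 2 := pow_le_pow_left₀ (by linarith) hγB 2
  have hk0 : 0 ≤ k := div_nonneg (by nlinarith) (by positivity)
  have hzt : z ≤ γ ^ 2 := by nlinarith
  have hk : k * (γ ^ 2 + z) ≤ γ ^ 2 - z := by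
    rw [div_mul_eq_mul_div, div_le_iff₀ (by positivity)]
    nlinarith [mul_nonneg (sub_nonneg.2 hAt) (sub_nonneg.2 htB)]
  have hden : 0 < γ ^ 2 + ζ * z := by nlinarith
  rw [Phi, div_le_div_iff₀ hden (by positivity), one_mul]
  calc (ζ * γ ^ 2 + z) * (1 + c * k) = ζ * γ ^ 2 + z + c * (k * (ζ * γ ^ 2 + z)) := by ring
    _ ≤ ζ * γ ^ 2 + z + c * (γ ^ 2 - z) := by
        gcongr
        calc k * (ζ * γ ^ 2 + z) ≤ k * (γ ^ 2 + z) := by gcongr; nlinarith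
          _ ≤ γ ^ 2 - z := hk
    _ ≤ ζ * γ ^ 2 + z + (1 - ζ) * (γ ^ 2 - z) := by gcongr; linarith
    _ = γ ^ 2 + ζ * z := by ring

theorem ae_mem_of_map_eq {α β : Type*} [MeasurableSpace α] [MeasurableSpace β] {μ : Measure α}
    {f g : α → β} {s : Set β} (hs : MeasurableSet s) (hg : AEMeasurable g μ)
    (hfg : μ.map f = μ.map g) (hf : ∀ᵐ x ∂μ, f x ∈ s) : ∀ᵐ x ∂μ, g x ∈ s := by
  refine ae_of_ae_map hg ?_
  rw [← hfg]
  by_cases hfm : AEMeasurable f μ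
  · exact (ae_map_iff hfm hs).2 hf
  · simp [Measure.map_of_not_aemeasurable hfm]

theorem stmt6_general {Ω : Type*} [MeasurableSpace Ω] (μ : Measure Ω)
    (lam llow lbar : ℝ) (dbar : ℕ)
    (hllow : 0 < llow)
    (Z ζ γ : Ω → ℝ)
    (hZmeas : Measurable Z)
    (hZrange : ∀ᵐ ω ∂μ, Z ω ∈ Set.Icc (0 : ℝ) 1)
    (hζrange : ∀ᵐ ω ∂μ, 0 ≤ ζ ω ∧ ζ ω ≤ 1 - 2 / (dbar : ℝ))
    (hγrange : ∀ᵐ ω ∂μ,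
      exp (llow * Real.sqrt (2 * lam)) ≤ γ ω ∧ γ ω ≤ exp (lbar * Real.sqrt (2 * lam)))
    (hfix : Measure.map (fun ω => Phi (ζ ω) (γ ω) (Z ω)) μ = Measure.map Z μ) :
    ∀ᵐ ω ∂μ, Z ω ≤ 1 / (1 + (2 / (dbar : ℝ)) *
      ((exp (2 * llow * Real.sqrt (2 * lam)) - 1) /
        (exp (2 * lbar * Real.sqrt (2 * lam)) + 1))) := by
  set s := Real.sqrt (2 * lam)
  have hexp_sq (l : ℝ) : exp (2 * l * s) = exp (l * s) ^ 2 := by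
    rw [← exp_nat_mul]; ring_nf
  rw [hexp_sq, hexp_sq]
  refine ae_mem_of_map_eq measurableSet_Iic hZmeas.aemeasurable hfix ?_
  filter_upwards [hZrange, hζrange, hγrange] with ω hZ hζ hγ
  exact Phi_le_of_mem_Icc (one_le_exp (by positivity)) hγ.1 hγ.2 (by positivity) hζ.1 hζ.2 hZ

/-- Let `λ > 0`, `0 < ℓ̲ ≤ ℓ̄`, `d̄ ≥ 2` an integer.  Let `Z` be `[0,1]`-valued and `(ζ, γ)`
independent of `Z` with a.s. `0 ≤ ζ ≤ 1 − 2/d̄` and `e^{ℓ̲√(2λ)} ≤ γ ≤ e^{ℓ̄√(2λ)}`, such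
that `Φ_{(ζ,γ)}(Z)` has the same law as `Z`.  Then almost surely
`Z ≤ 1/(1 + (2/d̄)·(e^{2ℓ̲√(2λ)} − 1)/(e^{2ℓ̄√(2λ)} + 1))`. -/
theorem stmt6 {Ω : Type*} [MeasurableSpace Ω] (μ : Measure Ω) [IsProbabilityMeasure μ]
    (lam llow lbar : ℝ) (dbar : ℕ)
    (hlam : 0 < lam) (hllow : 0 < llow) (hlord : llow ≤ lbar) (hdbar : 2 ≤ dbar)
    (Z ζ γ : Ω → ℝ)
    (hZmeas : Measurable Z) (hpairmeas : Measurable (fun ω => (ζ ω, γ ω)))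
    (hZrange : ∀ᵐ ω ∂μ, Z ω ∈ Set.Icc (0 : ℝ) 1)
    (hζrange : ∀ᵐ ω ∂μ, 0 ≤ ζ ω ∧ ζ ω ≤ 1 - 2 / (dbar : ℝ))
    (hγrange : ∀ᵐ ω ∂μ,
      exp (llow * Real.sqrt (2 * lam)) ≤ γ ω ∧ γ ω ≤ exp (lbar * Real.sqrt (2 * lam)))
    (hindep : IndepFun (fun ω => (ζ ω, γ ω)) Z μ)
    (hfix : Measure.map (fun ω => Phi (ζ ω) (γ ω) (Z ω)) μ = Measure.map Z μ) :
    ∀ᵐ ω ∂μ, Z ω ≤ 1 / (1 + (2 / (dbar : ℝ)) *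
      ((exp (2 * llow * Real.sqrt (2 * lam)) - 1) /
        (exp (2 * lbar * Real.sqrt (2 * lam)) + 1))) :=
  stmt6_general μ lam llow lbar dbar hllow Z ζ γ hZmeas hZrange hζrange hγrange hfix
end

section
/- There exists a deterministic constant Θ ∈ ℝ such that (1/k)·ln W_k → Θ almost surely as k → ∞; equivalently, W_k^{1/k} converges almost surely to the constant e^{Θ}. -/
open MeasureTheory ProbabilityTheory Filter

/-- Position after `i` steps of the nearest-neighbor integer path started at `1`,
whose `j`-th step is `+1` if `ε j = true` and `−1` otherwise. -/
def pathPos (ε : ℕ → Bool) (i : ℕ) : ℤ :=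
  1 + ∑ j ∈ Finset.range i, (if ε j then (1 : ℤ) else -1)

/-- The step sequence `ε` encodes a path in `𝕏_k`: a nearest-neighbor path
`x_0 = 1, …, x_{2k+1} = 0` with `x_i ≥ 1` for `1 ≤ i ≤ 2k`. -/
def validPath (k : ℕ) (ε : ℕ → Bool) : Prop :=
  pathPos ε (2 * k + 1) = 0 ∧ ∀ i, 1 ≤ i → i ≤ 2 * k → 1 ≤ pathPos ε i

/-- The weight `∏_{i=0}^{2k} J^{x_i}_{x_{i+1}−x_i}` of the path encoded by `ε`, where
`J^j_{+1} = F₊(X_{j−1}, X_j)` and `J^j_{−1} = F₋(X_{j−1}, X_j)`. -/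
noncomputable def pathWeight {S : Type*} (Fp Fm : S × S → ℝ) (Xseq : ℕ → S) (k : ℕ)
    (ε : ℕ → Bool) : ℝ :=
  ∏ i ∈ Finset.range (2 * k + 1),
    (if ε i then Fp else Fm) (Xseq (pathPos ε i - 1).toNat, Xseq (pathPos ε i).toNat)

/-- The partition function `W_k = ∑_{x ∈ 𝕏_k} ∏_{i=0}^{2k} J^{x_i}_{x_{i+1}−x_i}`,
with paths encoded by their step sequences. -/
noncomputable def partitionW {S : Type*} (Fp Fm : S × S → ℝ) (Xseq : ℕ → S) (k : ℕ) : ℝ :=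
  ∑ ε : Fin (2 * k + 1) → Bool,
    Set.indicator {ε' : ℕ → Bool | validPath k ε'} (pathWeight Fp Fm Xseq k)
      (fun j => if h : j < 2 * k + 1 then ε ⟨j, h⟩ else false)

namespace Stmt7Aux

open scoped Classical

/-- extension of a finite boolean vector by `false` -/
def extB (N : ℕ) (ε : Fin N → Bool) : ℕ → Bool := fun j => if h : j < N then ε ⟨j, h⟩ else false

lemma extB_lt {N : ℕ} (ε : Fin N → Bool) {j : ℕ} (h : j < N) : extB N ε j = ε ⟨j, h⟩ :=
  dif_pos h

lemma extB_ge {N : ℕ} (ε : Fin N → Bool) {j : ℕ} (h : ¬ j < N) : extB N ε j = false :=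
  dif_neg h

lemma extB_injective {N : ℕ} : Function.Injective (extB N) := by
  intro ε ε' h
  funext j
  have := congrFun h j.val
  rw [extB_lt ε j.isLt, extB_lt ε' j.isLt] at this
  exact this

lemma pathPos_zero (ε : ℕ → Bool) : pathPos ε 0 = 1 := by simp [pathPos]

lemma pathPos_succ (ε : ℕ → Bool) (i : ℕ) :
    pathPos ε (i + 1) = pathPos ε i + (if ε i then (1 : ℤ) else -1) := by
  simp [pathPos, Finset.sum_range_succ, add_assoc]

lemma pathPos_congr {ε ε' : ℕ → Bool} {i : ℕ} (h : ∀ j, j < i → ε j = ε' j) :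
    pathPos ε i = pathPos ε' i := by
  unfold pathPos
  congr 1
  exact Finset.sum_congr rfl fun j hj => by rw [h j (Finset.mem_range.1 hj)]

lemma pathPos_add (ε : ℕ → Bool) (a i : ℕ) :
    pathPos ε (a + i) = pathPos ε a + ∑ j ∈ Finset.range i, (if ε (a + j) then (1 : ℤ) else -1) := by
  unfold pathPos
  rw [Finset.sum_range_add]
  ring

lemma validPath_last {k : ℕ} {ε : ℕ → Bool} (h : validPath k ε) :
    ε (2 * k) = false ∧ pathPos ε (2 * k) = 1 := by
  have h1 := pathPos_succ ε (2 * k)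
  rw [h.1] at h1
  have hge : 1 ≤ pathPos ε (2 * k) := by
    rcases Nat.eq_zero_or_pos k with hk | hk
    · subst hk; simpa using (pathPos_zero ε).ge
    · exact h.2 _ (by omega) le_rfl
  cases hb : ε (2 * k)
  · rw [hb] at h1; simp at h1; exact ⟨rfl, by omega⟩
  · exfalso; rw [hb] at h1; simp at h1; omega

section weights

variable {S : Type*} {Fp Fm : S × S → ℝ} {c C : ℝ}

lemma factor_mem (hFpbd : ∀ y, Fp y ∈ Set.Icc c C) (hFmbd : ∀ y, Fm y ∈ Set.Icc c C)
    (b : Bool) (y : S × S) : (if b then Fp else Fm) y ∈ Set.Icc c C := by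
  cases b <;> simp [hFpbd y, hFmbd y]

lemma le_pathWeight (hc : 0 < c) (hFpbd : ∀ y, Fp y ∈ Set.Icc c C)
    (hFmbd : ∀ y, Fm y ∈ Set.Icc c C) (s : ℕ → S) (k : ℕ) (ε : ℕ → Bool) :
    c ^ (2 * k + 1) ≤ pathWeight Fp Fm s k ε := by
  rw [← Finset.card_range (2 * k + 1), ← Finset.prod_const]
  exact Finset.prod_le_prod (fun i _ => hc.le)
    (fun i _ => (factor_mem hFpbd hFmbd _ _).1)

lemma pathWeight_le (hc : 0 < c) (hFpbd : ∀ y, Fp y ∈ Set.Icc c C)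
    (hFmbd : ∀ y, Fm y ∈ Set.Icc c C) (s : ℕ → S) (k : ℕ) (ε : ℕ → Bool) :
    pathWeight Fp Fm s k ε ≤ C ^ (2 * k + 1) := by
  rw [← Finset.card_range (2 * k + 1), ← Finset.prod_const]
  exact Finset.prod_le_prod
    (fun i _ => le_trans hc.le (factor_mem hFpbd hFmbd _ _).1)
    (fun i _ => (factor_mem hFpbd hFmbd _ _).2)

lemma pathWeight_pos (hc : 0 < c) (hFpbd : ∀ y, Fp y ∈ Set.Icc c C)
    (hFmbd : ∀ y, Fm y ∈ Set.Icc c C) (s : ℕ → S) (k : ℕ) (ε : ℕ → Bool) :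
    0 < pathWeight Fp Fm s k ε :=
  lt_of_lt_of_le (pow_pos hc _) (le_pathWeight hc hFpbd hFmbd s k ε)

/-- `partitionW` as a sum over the valid paths. -/
lemma partitionW_eq (Fp Fm : S × S → ℝ) (s : ℕ → S) (k : ℕ) :
    partitionW Fp Fm s k =
      ∑ ε ∈ Finset.univ.filter
          (fun ε : Fin (2 * k + 1) → Bool => validPath k (extB (2 * k + 1) ε)),
        pathWeight Fp Fm s k (extB (2 * k + 1) ε) := by
  rw [Finset.sum_filter]
  refine Finset.sum_congr rfl fun ε _ => ?_
  by_cases h : validPath k (extB (2 * k + 1) ε)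
  · rw [if_pos h]
    exact Set.indicator_of_mem
      (show extB (2 * k + 1) ε ∈ {ε' : ℕ → Bool | validPath k ε'} from h) _
  · rw [if_neg h]
    exact Set.indicator_of_notMem
      (show extB (2 * k + 1) ε ∉ {ε' : ℕ → Bool | validPath k ε'} from h) _

end weights

section bounds

variable {S : Type*} {Fp Fm : S × S → ℝ} {c C : ℝ}

lemma partitionW_le (hc : 0 < c) (hcC : c ≤ C) (hFpbd : ∀ y, Fp y ∈ Set.Icc c C)
    (hFmbd : ∀ y, Fm y ∈ Set.Icc c C) (s : ℕ → S) (k : ℕ) :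
    partitionW Fp Fm s k ≤ (2 * C) ^ (2 * k + 1) := by
  have hC : 0 < C := hc.trans_le hcC
  rw [partitionW_eq]
  calc ∑ ε ∈ Finset.univ.filter
        (fun ε : Fin (2 * k + 1) → Bool => validPath k (extB (2 * k + 1) ε)),
        pathWeight Fp Fm s k (extB (2 * k + 1) ε)
      ≤ ∑ _ε ∈ Finset.univ.filter
        (fun ε : Fin (2 * k + 1) → Bool => validPath k (extB (2 * k + 1) ε)),
        C ^ (2 * k + 1) :=
        Finset.sum_le_sum fun ε _ => pathWeight_le hc hFpbd hFmbd s k _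
    _ ≤ ∑ _ε ∈ (Finset.univ : Finset (Fin (2 * k + 1) → Bool)), C ^ (2 * k + 1) :=
        Finset.sum_le_sum_of_subset_of_nonneg (Finset.filter_subset _ _)
          (fun _ _ _ => pow_nonneg hC.le _)
    _ = (2 : ℝ) ^ (2 * k + 1) * C ^ (2 * k + 1) := by
        rw [Finset.sum_const, Finset.card_univ, Fintype.card_fun]
        simp [nsmul_eq_mul]
    _ = (2 * C) ^ (2 * k + 1) := (mul_pow _ _ _).symm

/-- the standard valid path: `k` up-steps followed by `k+1` down-steps. -/
def stdPath (k : ℕ) : Fin (2 * k + 1) → Bool := fun j => decide (j.val < k)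

lemma stdPath_pathPos (k : ℕ) :
    ∀ i, i ≤ 2 * k + 1 →
      pathPos (extB (2 * k + 1) (stdPath k)) i
        = if i ≤ k then (1 + i : ℤ) else (1 + 2 * k - i : ℤ) := by
  intro i
  induction i with
  | zero => intro _; simp [pathPos_zero]
  | succ i ih =>
    intro hi
    have hi' : i ≤ 2 * k + 1 := by omega
    have hstep : extB (2 * k + 1) (stdPath k) i = decide (i < k) := by
      rw [extB_lt _ (show i < 2 * k + 1 by omega)]
      rfl
    rw [pathPos_succ, ih hi', hstep]
    by_cases hik : i < k
    · rw [if_pos (show decide (i < k) = true by simpa using hik),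
        if_pos (show i ≤ k by omega), if_pos (show i + 1 ≤ k by omega)]
      push_cast
      ring
    · rw [if_neg (show ¬ decide (i < k) = true by simpa using hik),
        if_neg (show ¬ i + 1 ≤ k by omega)]
      by_cases hik' : i ≤ k
      · have hik'' : i = k := by omega
        subst hik''
        rw [if_pos le_rfl]
        push_cast
        ring
      · rw [if_neg hik']
        push_cast
        ring
    
lemma stdPath_valid (k : ℕ) : validPath k (extB (2 * k + 1) (stdPath k)) := by
  constructor
  · rw [stdPath_pathPos k _ le_rfl, if_neg (by omega : ¬ 2 * k + 1 ≤ k)]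
    push_cast
    ring
  · intro i h1 h2
    rw [stdPath_pathPos k _ (by omega)]
    by_cases hik : i ≤ k
    · rw [if_pos hik]; omega
    · rw [if_neg hik]; omega

lemma le_partitionW (hc : 0 < c) (hFpbd : ∀ y, Fp y ∈ Set.Icc c C)
    (hFmbd : ∀ y, Fm y ∈ Set.Icc c C) (s : ℕ → S) (k : ℕ) :
    c ^ (2 * k + 1) ≤ partitionW Fp Fm s k := by
  rw [partitionW_eq]
  refine le_trans (le_pathWeight hc hFpbd hFmbd s k (extB (2 * k + 1) (stdPath k))) ?_
  refine Finset.single_le_sum (f := fun ε : Fin (2 * k + 1) → Bool =>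
      pathWeight Fp Fm s k (extB (2 * k + 1) ε))
    (fun ε _ => (pathWeight_pos hc hFpbd hFmbd s k _).le) ?_
  exact Finset.mem_filter.2 ⟨Finset.mem_univ _, stdPath_valid k⟩

lemma partitionW_pos (hc : 0 < c) (hFpbd : ∀ y, Fp y ∈ Set.Icc c C)
    (hFmbd : ∀ y, Fm y ∈ Set.Icc c C) (s : ℕ → S) (k : ℕ) :
    0 < partitionW Fp Fm s k :=
  lt_of_lt_of_le (pow_pos hc _) (le_partitionW hc hFpbd hFmbd s k)

end bounds

section concat

variable {S : Type*} {Fp Fm : S × S → ℝ} {c C : ℝ}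

lemma partitionW_zero (Fp Fm : S × S → ℝ) (s : ℕ → S) :
    partitionW Fp Fm s 0 = Fm (s 0, s 1) := by
  rw [partitionW_eq]
  have hfilter : Finset.univ.filter
      (fun ε : Fin (2 * 0 + 1) → Bool => validPath 0 (extB (2 * 0 + 1) ε))
      = {fun _ => false} := by
    ext ε
    simp only [Finset.mem_filter, Finset.mem_univ, true_and, Finset.mem_singleton]
    constructor
    · intro h
      have h0 : ε ⟨0, by omega⟩ = false := by
        have := (validPath_last h).1
        rwa [extB_lt ε (by omega : 2 * 0 < 2 * 0 + 1)] at this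
      funext j
      have : j = ⟨0, by omega⟩ := by
        ext
        omega
      rw [this, h0]
    · rintro rfl
      constructor
      · rw [show 2 * 0 + 1 = 0 + 1 from rfl, pathPos_succ, pathPos_zero,
          extB_lt _ (by omega : 0 < 2 * 0 + 1)]
        simp
      · intro i h1 h2
        omega
  rw [hfilter, Finset.sum_singleton]
  have hext : extB (2 * 0 + 1) (fun _ => false) = fun _ => false := by
    funext j
    by_cases h : j < 2 * 0 + 1
    · rw [extB_lt _ h]
    · rw [extB_ge _ h]
  rw [hext]
  unfold pathWeight
  rw [show 2 * 0 + 1 = 1 from rfl, Finset.prod_range_one, pathPos_zero]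
  norm_num

/-- Concatenation of two path encodings: follow the first path for its first `2m` steps
(ending back at height 1), then follow the second path. -/
def concatP (m n : ℕ) (p : (Fin (2 * m + 1) → Bool) × (Fin (2 * n + 1) → Bool)) :
    Fin (2 * (m + n) + 1) → Bool :=
  fun j => if h : j.val < 2 * m then p.1 ⟨j.val, by omega⟩
    else p.2 ⟨j.val - 2 * m, by have := j.isLt; omega⟩

variable {m n : ℕ} {ε : Fin (2 * m + 1) → Bool} {ε' : Fin (2 * n + 1) → Bool}

lemma concat_low {j : ℕ} (hj : j < 2 * m) :
    extB (2 * (m + n) + 1) (concatP m n (ε, ε')) j = extB (2 * m + 1) ε j := by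
  rw [extB_lt _ (show j < 2 * (m + n) + 1 by omega), extB_lt _ (show j < 2 * m + 1 by omega)]
  unfold concatP
  rw [dif_pos hj]

lemma concat_high (j : ℕ) :
    extB (2 * (m + n) + 1) (concatP m n (ε, ε')) (2 * m + j) = extB (2 * n + 1) ε' j := by
  by_cases hj : j < 2 * n + 1
  · rw [extB_lt _ (show 2 * m + j < 2 * (m + n) + 1 by omega), extB_lt _ hj]
    unfold concatP
    rw [dif_neg (show ¬ (2 * m + j) < 2 * m by omega)]
    exact congrArg ε' (Fin.ext (by simp))
  · rw [extB_ge _ (show ¬ 2 * m + j < 2 * (m + n) + 1 by omega), extB_ge _ hj]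

lemma concat_pathPos_low {i : ℕ} (hi : i ≤ 2 * m) :
    pathPos (extB (2 * (m + n) + 1) (concatP m n (ε, ε'))) i
      = pathPos (extB (2 * m + 1) ε) i :=
  pathPos_congr fun j hj => concat_low (by omega)

lemma concat_pathPos_high (ha : validPath m (extB (2 * m + 1) ε)) (i : ℕ) :
    pathPos (extB (2 * (m + n) + 1) (concatP m n (ε, ε'))) (2 * m + i)
      = pathPos (extB (2 * n + 1) ε') i := by
  rw [pathPos_add, concat_pathPos_low le_rfl, (validPath_last ha).2]
  have : ∀ j ∈ Finset.range i,
      (if extB (2 * (m + n) + 1) (concatP m n (ε, ε')) (2 * m + j) then (1 : ℤ) else -1)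
        = (if extB (2 * n + 1) ε' j then (1 : ℤ) else -1) := by
    intro j _
    rw [concat_high]
  rw [Finset.sum_congr rfl this]
  rfl

lemma concat_valid (ha : validPath m (extB (2 * m + 1) ε))
    (hb : validPath n (extB (2 * n + 1) ε')) :
    validPath (m + n) (extB (2 * (m + n) + 1) (concatP m n (ε, ε'))) := by
  constructor
  · have h := concat_pathPos_high (ε' := ε') (n := n) ha (2 * n + 1)
    rw [show 2 * m + (2 * n + 1) = 2 * (m + n) + 1 by omega] at h
    rw [h]
    exact hb.1
  · intro i h1 h2
    by_cases hi : i ≤ 2 * m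
    · rw [concat_pathPos_low hi]
      exact ha.2 i h1 hi
    · rw [show i = 2 * m + (i - 2 * m) by omega, concat_pathPos_high ha]
      exact hb.2 _ (by omega) (by omega)

lemma concat_weight (s : ℕ → S) (ha : validPath m (extB (2 * m + 1) ε)) :
    pathWeight Fp Fm s m (extB (2 * m + 1) ε) * pathWeight Fp Fm s n (extB (2 * n + 1) ε')
      = Fm (s 0, s 1)
        * pathWeight Fp Fm s (m + n) (extB (2 * (m + n) + 1) (concatP m n (ε, ε'))) := by
  set a := extB (2 * m + 1) ε with haa
  set b := extB (2 * n + 1) ε' with hbb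
  set δ := extB (2 * (m + n) + 1) (concatP m n (ε, ε')) with hdd
  have hsplit : pathWeight Fp Fm s (m + n) δ
      = (∏ i ∈ Finset.range (2 * m),
          (if δ i then Fp else Fm) (s (pathPos δ i - 1).toNat, s (pathPos δ i).toNat))
        * ∏ i ∈ Finset.range (2 * n + 1),
          (if δ (2 * m + i) then Fp else Fm)
            (s (pathPos δ (2 * m + i) - 1).toNat, s (pathPos δ (2 * m + i)).toNat) := by
    unfold pathWeight
    rw [show 2 * (m + n) + 1 = 2 * m + (2 * n + 1) by omega, Finset.prod_range_add]
  have hlow : ∀ i ∈ Finset.range (2 * m),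
      (if δ i then Fp else Fm) (s (pathPos δ i - 1).toNat, s (pathPos δ i).toNat)
        = (if a i then Fp else Fm) (s (pathPos a i - 1).toNat, s (pathPos a i).toNat) := by
    intro i hi
    have hi' := Finset.mem_range.1 hi
    rw [hdd, haa, concat_low hi', concat_pathPos_low (by omega)]
  have hhigh : ∀ i ∈ Finset.range (2 * n + 1),
      (if δ (2 * m + i) then Fp else Fm)
          (s (pathPos δ (2 * m + i) - 1).toNat, s (pathPos δ (2 * m + i)).toNat)
        = (if b i then Fp else Fm) (s (pathPos b i - 1).toNat, s (pathPos b i).toNat) := by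
    intro i _
    rw [hdd, hbb, concat_high, concat_pathPos_high ha]
  have hwa : pathWeight Fp Fm s m a
      = (∏ i ∈ Finset.range (2 * m),
          (if a i then Fp else Fm) (s (pathPos a i - 1).toNat, s (pathPos a i).toNat))
        * Fm (s 0, s 1) := by
    unfold pathWeight
    rw [Finset.prod_range_succ, (validPath_last ha).1, (validPath_last ha).2]
    norm_num
  rw [hsplit, Finset.prod_congr rfl hlow, Finset.prod_congr rfl hhigh, hwa]
  unfold pathWeight
  ring

lemma concat_injOn (m n : ℕ)
    (P : Finset ((Fin (2 * m + 1) → Bool) × (Fin (2 * n + 1) → Bool)))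
    (hP : ∀ p ∈ P, validPath m (extB (2 * m + 1) p.1)) :
    ∀ p ∈ P, ∀ q ∈ P, concatP m n p = concatP m n q → p = q := by
  rintro ⟨ε, ε'⟩ hp ⟨ι, ι'⟩ hq h
  have hext : extB (2 * (m + n) + 1) (concatP m n (ε, ε'))
      = extB (2 * (m + n) + 1) (concatP m n (ι, ι')) := by rw [h]
  have h2 : ε' = ι' := by
    apply extB_injective
    funext j
    have := congrFun hext (2 * m + j)
    rwa [concat_high, concat_high] at this
  have h1 : ε = ι := by
    apply extB_injective
    funext j
    by_cases hj : j < 2 * m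
    · have := congrFun hext j
      rwa [concat_low hj, concat_low hj] at this
    · by_cases hj' : j < 2 * m + 1
      · have hj2 : j = 2 * m := by omega
        subst hj2
        have e1 := (validPath_last (hP _ hp)).1
        have e2 := (validPath_last (hP _ hq)).1
        simp only at e1 e2
        rw [e1, e2]
      · rw [extB_ge _ hj', extB_ge _ hj']
  rw [h1, h2]

set_option maxHeartbeats 1000000 in
lemma superadditive (hc : 0 < c) (hFpbd : ∀ y, Fp y ∈ Set.Icc c C)
    (hFmbd : ∀ y, Fm y ∈ Set.Icc c C) (s : ℕ → S) (m n : ℕ) :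
    partitionW Fp Fm s m * partitionW Fp Fm s n
      ≤ Fm (s 0, s 1) * partitionW Fp Fm s (m + n) := by
  set F1 := Finset.univ.filter
    (fun ε : Fin (2 * m + 1) → Bool => validPath m (extB (2 * m + 1) ε)) with hF1
  set F2 := Finset.univ.filter
    (fun ε : Fin (2 * n + 1) → Bool => validPath n (extB (2 * n + 1) ε)) with hF2
  set F := Finset.univ.filter
    (fun ε : Fin (2 * (m + n) + 1) → Bool => validPath (m + n) (extB (2 * (m + n) + 1) ε)) with hF
  have hP : ∀ p ∈ F1 ×ˢ F2, validPath m (extB (2 * m + 1) p.1) := by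
    rintro ⟨ε, ε'⟩ hp
    exact (Finset.mem_filter.1 (Finset.mem_product.1 hp).1).2
  calc partitionW Fp Fm s m * partitionW Fp Fm s n
      = ∑ p ∈ F1 ×ˢ F2, pathWeight Fp Fm s m (extB (2 * m + 1) p.1)
          * pathWeight Fp Fm s n (extB (2 * n + 1) p.2) := by
        rw [partitionW_eq, partitionW_eq, Finset.sum_mul_sum, ← Finset.sum_product']
    _ = ∑ p ∈ F1 ×ˢ F2, Fm (s 0, s 1)
          * pathWeight Fp Fm s (m + n) (extB (2 * (m + n) + 1) (concatP m n p)) := by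
        refine Finset.sum_congr rfl fun p hp => ?_
        obtain ⟨ε, ε'⟩ := p
        exact concat_weight s (hP _ hp)
    _ = ∑ q ∈ (F1 ×ˢ F2).image (concatP m n), Fm (s 0, s 1)
          * pathWeight Fp Fm s (m + n) (extB (2 * (m + n) + 1) q) :=
        (Finset.sum_image (f := fun q => Fm (s 0, s 1)
          * pathWeight Fp Fm s (m + n) (extB (2 * (m + n) + 1) q))
          (concat_injOn m n _ hP)).symm
    _ ≤ ∑ q ∈ F, Fm (s 0, s 1)
          * pathWeight Fp Fm s (m + n) (extB (2 * (m + n) + 1) q) := by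
        refine Finset.sum_le_sum_of_subset_of_nonneg ?_ fun q _ _ =>
          mul_nonneg (le_trans hc.le (hFmbd _).1) (pathWeight_pos hc hFpbd hFmbd s _ _).le
        intro q hq
        obtain ⟨p, hp, rfl⟩ := Finset.mem_image.1 hq
        obtain ⟨ε, ε'⟩ := p
        refine Finset.mem_filter.2 ⟨Finset.mem_univ _, ?_⟩
        exact concat_valid (hP _ hp) (Finset.mem_filter.1 (Finset.mem_product.1 hp).2).2
    _ = Fm (s 0, s 1) * partitionW Fp Fm s (m + n) := by
        rw [partitionW_eq, Finset.mul_sum]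

end concat

section shift

variable {S : Type*} {Fp Fm : S × S → ℝ} {c C : ℝ}

/-- Lift a path encoding: step up first, follow the path one level higher, then step down. -/
def shiftP (n : ℕ) (ε : Fin (2 * n + 1) → Bool) : Fin (2 * (n + 1) + 1) → Bool :=
  fun j => if j.val = 0 then true
    else if h : j.val - 1 < 2 * n + 1 then ε ⟨j.val - 1, h⟩ else false

variable {n : ℕ} {ε : Fin (2 * n + 1) → Bool}

lemma shiftP_zero : extB (2 * (n + 1) + 1) (shiftP n ε) 0 = true := by
  rw [extB_lt _ (show 0 < 2 * (n + 1) + 1 by omega)]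
  unfold shiftP
  rw [if_pos rfl]

lemma shiftP_succ (j : ℕ) :
    extB (2 * (n + 1) + 1) (shiftP n ε) (1 + j) = extB (2 * n + 1) ε j := by
  by_cases hj : j < 2 * n + 1
  · rw [extB_lt _ (show 1 + j < 2 * (n + 1) + 1 by omega), extB_lt _ hj]
    unfold shiftP
    rw [if_neg (show ¬ ((⟨1 + j, _⟩ : Fin (2 * (n + 1) + 1)).val = 0) by simp),
      dif_pos (show (⟨1 + j, _⟩ : Fin (2 * (n + 1) + 1)).val - 1 < 2 * n + 1 by simpa using hj)]
    exact congrArg ε (Fin.ext (by simp))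
  · by_cases hj' : 1 + j < 2 * (n + 1) + 1
    · rw [extB_lt _ hj', extB_ge _ hj]
      unfold shiftP
      rw [if_neg (by simp), dif_neg (by simpa using hj)]
    · rw [extB_ge _ hj', extB_ge _ hj]

lemma shiftP_pathPos (i : ℕ) :
    pathPos (extB (2 * (n + 1) + 1) (shiftP n ε)) (1 + i)
      = 1 + pathPos (extB (2 * n + 1) ε) i := by
  rw [pathPos_add]
  have h1 : pathPos (extB (2 * (n + 1) + 1) (shiftP n ε)) 1 = 2 := by
    have h := pathPos_succ (extB (2 * (n + 1) + 1) (shiftP n ε)) 0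
    rw [pathPos_zero, shiftP_zero] at h
    simpa using h
  rw [h1]
  have h2 : ∀ j ∈ Finset.range i,
      (if extB (2 * (n + 1) + 1) (shiftP n ε) (1 + j) then (1 : ℤ) else -1)
        = (if extB (2 * n + 1) ε j then (1 : ℤ) else -1) := fun j _ => by rw [shiftP_succ]
  rw [Finset.sum_congr rfl h2]
  unfold pathPos
  ring

lemma valid_pathPos_nonneg {k : ℕ} {e : ℕ → Bool} (h : validPath k e) :
    ∀ i, i ≤ 2 * k + 1 → 0 ≤ pathPos e i := by
  intro i hi
  rcases Nat.eq_zero_or_pos i with h0 | h0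
  · subst h0; rw [pathPos_zero]; norm_num
  rcases Nat.lt_or_ge i (2 * k + 1) with h1 | h1
  · exact le_trans (by norm_num) (h.2 i h0 (by omega))
  · have : i = 2 * k + 1 := by omega
    rw [this, h.1]

lemma shiftP_valid (hb : validPath n (extB (2 * n + 1) ε)) :
    validPath (n + 1) (extB (2 * (n + 1) + 1) (shiftP n ε)) := by
  have hlast : extB (2 * n + 1) ε (2 * n + 1) = false := extB_ge _ (by omega)
  constructor
  · have h := shiftP_pathPos (ε := ε) (2 * n + 2)
    rw [show (1 : ℕ) + (2 * n + 2) = 2 * (n + 1) + 1 by omega] at h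
    rw [h, show 2 * n + 2 = (2 * n + 1) + 1 from rfl, pathPos_succ, hb.1, hlast]
    norm_num
  · intro i h1 h2
    have h := shiftP_pathPos (ε := ε) (i - 1)
    rw [show (1 : ℕ) + (i - 1) = i by omega] at h
    rw [h]
    have := valid_pathPos_nonneg hb (i - 1) (by omega)
    omega

lemma shiftP_weight (s : ℕ → S) (hb : validPath n (extB (2 * n + 1) ε)) :
    pathWeight Fp Fm s (n + 1) (extB (2 * (n + 1) + 1) (shiftP n ε))
      = Fp (s 0, s 1) * Fm (s 0, s 1)
        * pathWeight Fp Fm (fun i => s (i + 1)) n (extB (2 * n + 1) ε) := by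
  have hsplit : pathWeight Fp Fm s (n + 1) (extB (2 * (n + 1) + 1) (shiftP n ε))
      = ((if extB (2 * (n + 1) + 1) (shiftP n ε) 0 then Fp else Fm)
          (s (pathPos (extB (2 * (n + 1) + 1) (shiftP n ε)) 0 - 1).toNat,
            s (pathPos (extB (2 * (n + 1) + 1) (shiftP n ε)) 0).toNat))
        * ((∏ i ∈ Finset.range (2 * n + 1),
            (if extB (2 * (n + 1) + 1) (shiftP n ε) (1 + i) then Fp else Fm)
              (s (pathPos (extB (2 * (n + 1) + 1) (shiftP n ε)) (1 + i) - 1).toNat,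
                s (pathPos (extB (2 * (n + 1) + 1) (shiftP n ε)) (1 + i)).toNat))
          * ((if extB (2 * (n + 1) + 1) (shiftP n ε) (1 + (2 * n + 1)) then Fp else Fm)
              (s (pathPos (extB (2 * (n + 1) + 1) (shiftP n ε)) (1 + (2 * n + 1)) - 1).toNat,
                s (pathPos (extB (2 * (n + 1) + 1) (shiftP n ε)) (1 + (2 * n + 1))).toNat))) := by
    unfold pathWeight
    generalize extB (2 * (n + 1) + 1) (shiftP n ε) = e
    rw [show 2 * (n + 1) + 1 = 1 + (2 * n + 2) by omega, Finset.prod_range_add,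
      Finset.prod_range_one, show 2 * n + 2 = (2 * n + 1) + 1 from rfl, Finset.prod_range_succ]
  have hf0 : (if extB (2 * (n + 1) + 1) (shiftP n ε) 0 then Fp else Fm)
      (s (pathPos (extB (2 * (n + 1) + 1) (shiftP n ε)) 0 - 1).toNat,
        s (pathPos (extB (2 * (n + 1) + 1) (shiftP n ε)) 0).toNat)
      = Fp (s 0, s 1) := by
    rw [shiftP_zero, pathPos_zero]
    norm_num
  have hflast : (if extB (2 * (n + 1) + 1) (shiftP n ε) (1 + (2 * n + 1)) then Fp else Fm)
      (s (pathPos (extB (2 * (n + 1) + 1) (shiftP n ε)) (1 + (2 * n + 1)) - 1).toNat,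
        s (pathPos (extB (2 * (n + 1) + 1) (shiftP n ε)) (1 + (2 * n + 1))).toNat)
      = Fm (s 0, s 1) := by
    rw [shiftP_succ, shiftP_pathPos, extB_ge _ (show ¬ 2 * n + 1 < 2 * n + 1 by omega), hb.1]
    norm_num
  have hW : pathWeight Fp Fm (fun i => s (i + 1)) n (extB (2 * n + 1) ε)
      = ∏ i ∈ Finset.range (2 * n + 1),
          (if extB (2 * n + 1) ε i then Fp else Fm)
            (s ((pathPos (extB (2 * n + 1) ε) i - 1).toNat + 1),
              s ((pathPos (extB (2 * n + 1) ε) i).toNat + 1)) := rfl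
  have hmid : ∀ i ∈ Finset.range (2 * n + 1),
      (if extB (2 * (n + 1) + 1) (shiftP n ε) (1 + i) then Fp else Fm)
          (s (pathPos (extB (2 * (n + 1) + 1) (shiftP n ε)) (1 + i) - 1).toNat,
            s (pathPos (extB (2 * (n + 1) + 1) (shiftP n ε)) (1 + i)).toNat)
        = (if extB (2 * n + 1) ε i then Fp else Fm)
            (s ((pathPos (extB (2 * n + 1) ε) i - 1).toNat + 1),
              s ((pathPos (extB (2 * n + 1) ε) i).toNat + 1)) := by
    intro i hi
    have hi' := Finset.mem_range.1 hi
    have hp1 : 1 ≤ pathPos (extB (2 * n + 1) ε) i := by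
      rcases Nat.eq_zero_or_pos i with h0 | h0
      · subst h0; rw [pathPos_zero]
      · exact hb.2 i h0 (by omega)
    rw [shiftP_succ, shiftP_pathPos]
    have e1 : ((1 : ℤ) + pathPos (extB (2 * n + 1) ε) i - 1).toNat
        = (pathPos (extB (2 * n + 1) ε) i - 1).toNat + 1 := by omega
    have e2 : ((1 : ℤ) + pathPos (extB (2 * n + 1) ε) i).toNat
        = (pathPos (extB (2 * n + 1) ε) i).toNat + 1 := by omega
    rw [e1, e2]
  rw [hsplit, hf0, hflast, Finset.prod_congr rfl hmid, hW]
  ring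

lemma shiftP_injective (n : ℕ) : Function.Injective (shiftP n) := by
  intro ε ι h
  apply extB_injective
  funext j
  have h' : extB (2 * (n + 1) + 1) (shiftP n ε) = extB (2 * (n + 1) + 1) (shiftP n ι) := by
    rw [h]
  have := congrFun h' (1 + j)
  rwa [shiftP_succ, shiftP_succ] at this

set_option maxHeartbeats 1000000 in
lemma shift_le (hc : 0 < c) (hFpbd : ∀ y, Fp y ∈ Set.Icc c C)
    (hFmbd : ∀ y, Fm y ∈ Set.Icc c C) (s : ℕ → S) (n : ℕ) :
    Fp (s 0, s 1) * Fm (s 0, s 1) * partitionW Fp Fm (fun i => s (i + 1)) n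
      ≤ partitionW Fp Fm s (n + 1) := by
  set F := Finset.univ.filter
    (fun ε : Fin (2 * n + 1) → Bool => validPath n (extB (2 * n + 1) ε)) with hF
  have hstep : ∀ ε ∈ F, ∀ ι ∈ F, shiftP n ε = shiftP n ι → ε = ι :=
    fun ε _ ι _ h => shiftP_injective n h
  calc Fp (s 0, s 1) * Fm (s 0, s 1) * partitionW Fp Fm (fun i => s (i + 1)) n
      = ∑ ε ∈ F, Fp (s 0, s 1) * Fm (s 0, s 1)
          * pathWeight Fp Fm (fun i => s (i + 1)) n (extB (2 * n + 1) ε) := by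
        rw [partitionW_eq, Finset.mul_sum]
    _ = ∑ ε ∈ F, pathWeight Fp Fm s (n + 1) (extB (2 * (n + 1) + 1) (shiftP n ε)) := by
        refine Finset.sum_congr rfl fun ε hε => ?_
        rw [shiftP_weight s (Finset.mem_filter.1 hε).2]
    _ = ∑ q ∈ F.image (shiftP n), pathWeight Fp Fm s (n + 1) (extB (2 * (n + 1) + 1) q) :=
        (Finset.sum_image (f := fun q => pathWeight Fp Fm s (n + 1) (extB (2 * (n + 1) + 1) q))
          hstep).symm
    _ ≤ ∑ q ∈ Finset.univ.filter
          (fun ε : Fin (2 * (n + 1) + 1) → Bool => validPath (n + 1) (extB (2 * (n + 1) + 1) ε)),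
          pathWeight Fp Fm s (n + 1) (extB (2 * (n + 1) + 1) q) := by
        refine Finset.sum_le_sum_of_subset_of_nonneg ?_ fun q _ _ =>
          (pathWeight_pos hc hFpbd hFmbd s _ _).le
        intro q hq
        obtain ⟨ε, hε, rfl⟩ := Finset.mem_image.1 hq
        exact Finset.mem_filter.2 ⟨Finset.mem_univ _, shiftP_valid (Finset.mem_filter.1 hε).2⟩
    _ = partitionW Fp Fm s (n + 1) := (partitionW_eq Fp Fm s (n + 1)).symm

end shift

section fekete

variable {S : Type*} {Fp Fm : S × S → ℝ} {c C : ℝ}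

/-- The deterministic subadditive auxiliary sequence. -/
noncomputable def useq (Fp Fm : S × S → ℝ) (s : ℕ → S) (k : ℕ) : ℝ :=
  Real.log (Fm (s 0, s 1)) - Real.log (partitionW Fp Fm s k)

/-- The limit of `(1/k) log W_k`. -/
noncomputable def Glim (Fp Fm : S × S → ℝ) (s : ℕ → S) : ℝ :=
  - sInf ((fun n : ℕ => useq Fp Fm s n / n) '' Set.Ici 1)

lemma useq_subadditive (hc : 0 < c) (hFpbd : ∀ y, Fp y ∈ Set.Icc c C)
    (hFmbd : ∀ y, Fm y ∈ Set.Icc c C) (s : ℕ → S) : Subadditive (useq Fp Fm s) := by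
  intro m n
  have hFm' : (0 : ℝ) < Fm (s 0, s 1) := lt_of_lt_of_le hc (hFmbd _).1
  have hm := partitionW_pos hc hFpbd hFmbd s m
  have hn := partitionW_pos hc hFpbd hFmbd s n
  have hmn := partitionW_pos hc hFpbd hFmbd s (m + n)
  have h := Real.log_le_log (by positivity) (superadditive hc hFpbd hFmbd s m n)
  rw [Real.log_mul hm.ne' hn.ne', Real.log_mul hFm'.ne' hmn.ne'] at h
  unfold useq
  linarith

lemma useq_bddBelow (hc : 0 < c) (hcC : c ≤ C) (hFpbd : ∀ y, Fp y ∈ Set.Icc c C)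
    (hFmbd : ∀ y, Fm y ∈ Set.Icc c C) (s : ℕ → S) :
    BddBelow (Set.range fun n : ℕ => useq Fp Fm s n / n) := by
  set A := Real.log c with hA
  set B := Real.log (2 * C) with hB
  refine ⟨-(|A| + 3 * |B|), ?_⟩
  rintro x ⟨n, rfl⟩
  rcases Nat.eq_zero_or_pos n with h0 | h0
  · subst h0
    have h1 : (0:ℝ) ≤ |A| := abs_nonneg _
    have h2 : (0:ℝ) ≤ |B| := abs_nonneg _
    show -(|A| + 3 * |B|) ≤ useq Fp Fm s 0 / ((0:ℕ):ℝ)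
    rw [Nat.cast_zero, div_zero]
    linarith
  have hn1 : (1 : ℝ) ≤ (n : ℝ) := by exact_mod_cast h0
  have hnpos : (0 : ℝ) < (n : ℝ) := by linarith
  show -(|A| + 3 * |B|) ≤ useq Fp Fm s n / (n:ℝ)
  rw [le_div_iff₀ hnpos]
  have hWle : Real.log (partitionW Fp Fm s n) ≤ (2 * (n : ℝ) + 1) * B := by
    have h := Real.log_le_log (partitionW_pos hc hFpbd hFmbd s n)
      (partitionW_le hc hcC hFpbd hFmbd s n)
    rw [Real.log_pow] at h
    refine h.trans ?_
    push_cast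
    have h2C : (0:ℝ) < 2 * C := by linarith
    nlinarith [le_abs_self B, abs_nonneg B]
  have hFm' : A ≤ Real.log (Fm (s 0, s 1)) :=
    Real.log_le_log hc (hFmbd _).1
  have hu : A - (2 * (n : ℝ) + 1) * B ≤ useq Fp Fm s n := by
    unfold useq
    linarith
  refine le_trans ?_ hu
  nlinarith [neg_abs_le A, le_abs_self B, abs_nonneg A, abs_nonneg B,
    mul_nonneg (sub_nonneg.2 hn1) (abs_nonneg A), mul_nonneg (sub_nonneg.2 hn1) (abs_nonneg B)]

lemma tendsto_Glim (hc : 0 < c) (hcC : c ≤ C) (hFpbd : ∀ y, Fp y ∈ Set.Icc c C)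
    (hFmbd : ∀ y, Fm y ∈ Set.Icc c C) (s : ℕ → S) :
    Tendsto (fun k : ℕ => (1 / (k : ℝ)) * Real.log (partitionW Fp Fm s k))
      atTop (nhds (Glim Fp Fm s)) := by
  have hsub := useq_subadditive hc hFpbd hFmbd s
  have hbdd := useq_bddBelow hc hcC hFpbd hFmbd s
  have h1 := hsub.tendsto_lim hbdd
  have hlim : hsub.lim = - Glim Fp Fm s := by
    rw [Glim, Subadditive.lim, neg_neg]
  rw [hlim] at h1
  have h2 : Tendsto (fun k : ℕ => Real.log (Fm (s 0, s 1)) / (k : ℝ)) atTop (nhds 0) :=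
    tendsto_const_div_atTop_nhds_zero_nat _
  have h3 := h2.sub h1
  rw [zero_sub, neg_neg] at h3
  refine h3.congr fun k => ?_
  unfold useq
  ring

lemma Glim_abs_le (hc : 0 < c) (hcC : c ≤ C) (hFpbd : ∀ y, Fp y ∈ Set.Icc c C)
    (hFmbd : ∀ y, Fm y ∈ Set.Icc c C) (s : ℕ → S) :
    |Glim Fp Fm s| ≤ 3 * (|Real.log c| + |Real.log (2 * C)|) := by
  set A := Real.log c with hA
  set B := Real.log (2 * C) with hB
  have habs : Tendsto (fun k : ℕ => |(1 / (k : ℝ)) * Real.log (partitionW Fp Fm s k)|)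
      atTop (nhds |Glim Fp Fm s|) := (tendsto_Glim hc hcC hFpbd hFmbd s).abs
  refine le_of_tendsto habs ?_
  filter_upwards [eventually_ge_atTop 1] with k hk
  have hk1 : (1 : ℝ) ≤ (k : ℝ) := by exact_mod_cast hk
  have hkpos : (0 : ℝ) < (k : ℝ) := by linarith
  have hWlo : (2 * (k : ℝ) + 1) * A ≤ Real.log (partitionW Fp Fm s k) := by
    have h := Real.log_le_log (pow_pos hc _) (le_partitionW hc hFpbd hFmbd s k)
    rw [Real.log_pow] at h
    refine le_trans (le_of_eq ?_) h
    push_cast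
    ring
  have hWhi : Real.log (partitionW Fp Fm s k) ≤ (2 * (k : ℝ) + 1) * B := by
    have h := Real.log_le_log (partitionW_pos hc hFpbd hFmbd s k)
      (partitionW_le hc hcC hFpbd hFmbd s k)
    rw [Real.log_pow] at h
    refine h.trans (le_of_eq ?_)
    push_cast
    ring
  rw [abs_mul, abs_of_nonneg (by positivity : (0:ℝ) ≤ 1 / (k:ℝ))]
  rw [div_mul_eq_mul_div, one_mul, div_le_iff₀ hkpos]
  have h1 : |Real.log (partitionW Fp Fm s k)| ≤ (2 * (k : ℝ) + 1) * (|A| + |B|) := by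
    rw [abs_le]
    constructor
    · nlinarith [neg_abs_le A, neg_abs_le B, abs_nonneg A, abs_nonneg B]
    · nlinarith [le_abs_self A, le_abs_self B, abs_nonneg A, abs_nonneg B]
  refine h1.trans ?_
  nlinarith [abs_nonneg A, abs_nonneg B]

lemma Glim_shift_le (hc : 0 < c) (hcC : c ≤ C) (hFpbd : ∀ y, Fp y ∈ Set.Icc c C)
    (hFmbd : ∀ y, Fm y ∈ Set.Icc c C) (s : ℕ → S) :
    Glim Fp Fm (fun i => s (i + 1)) ≤ Glim Fp Fm s := by
  set s' := fun i => s (i + 1) with hs'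
  have hFp' : (0 : ℝ) < Fp (s 0, s 1) := lt_of_lt_of_le hc (hFpbd _).1
  have hFm' : (0 : ℝ) < Fm (s 0, s 1) := lt_of_lt_of_le hc (hFmbd _).1
  -- pointwise log inequality
  have key : ∀ n : ℕ,
      (1 / ((n : ℝ) + 1)) * (Real.log (Fp (s 0, s 1)) + Real.log (Fm (s 0, s 1))
          + Real.log (partitionW Fp Fm s' n))
        ≤ (1 / ((n : ℝ) + 1)) * Real.log (partitionW Fp Fm s (n + 1)) := by
    intro n
    have hW' := partitionW_pos hc hFpbd hFmbd s' n
    have h := Real.log_le_log (by positivity) (shift_le hc hFpbd hFmbd s n)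
    rw [Real.log_mul (by positivity) hW'.ne', Real.log_mul hFp'.ne' hFm'.ne'] at h
    have hpos : (0 : ℝ) < 1 / ((n : ℝ) + 1) := by positivity
    nlinarith
  -- limits of both sides
  have hRHS : Tendsto (fun n : ℕ => (1 / ((n : ℝ) + 1)) * Real.log (partitionW Fp Fm s (n + 1)))
      atTop (nhds (Glim Fp Fm s)) := by
    have := (tendsto_Glim hc hcC hFpbd hFmbd s).comp (tendsto_add_atTop_nat 1)
    refine this.congr fun n => ?_
    simp only [Function.comp_apply]
    push_cast
    ring_nf
  have hconst : Tendsto (fun n : ℕ =>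
      (1 / ((n : ℝ) + 1)) * (Real.log (Fp (s 0, s 1)) + Real.log (Fm (s 0, s 1)))) atTop
      (nhds 0) := by
    have h := tendsto_const_div_atTop_nhds_zero_nat
      (Real.log (Fp (s 0, s 1)) + Real.log (Fm (s 0, s 1)))
    have h2 := h.comp (tendsto_add_atTop_nat 1)
    refine h2.congr fun n => ?_
    simp only [Function.comp_apply]
    push_cast
    ring
  have hfrac : Tendsto (fun n : ℕ => (n : ℝ) / ((n : ℝ) + 1)) atTop (nhds 1) := by
    have h0 : Tendsto (fun n : ℕ => 1 - 1 / ((n : ℝ) + 1)) atTop (nhds (1 - 0)) := by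
      refine Tendsto.sub tendsto_const_nhds ?_
      have h := tendsto_const_div_atTop_nhds_zero_nat (1 : ℝ)
      have h2 := h.comp (tendsto_add_atTop_nat 1)
      refine h2.congr fun n => ?_
      simp only [Function.comp_apply]
      push_cast
      ring
    rw [sub_zero] at h0
    refine h0.congr' ?_
    filter_upwards [eventually_gt_atTop 0] with n hn
    have : ((n : ℝ) + 1) ≠ 0 := by positivity
    field_simp
    ring
  have hmain : Tendsto (fun n : ℕ => (1 / ((n : ℝ) + 1)) * Real.log (partitionW Fp Fm s' n))
      atTop (nhds (Glim Fp Fm s')) := by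
    have hmul := hfrac.mul (tendsto_Glim hc hcC hFpbd hFmbd s')
    rw [one_mul] at hmul
    refine hmul.congr' ?_
    filter_upwards [eventually_gt_atTop 0] with n hn
    have hnR : (0:ℝ) < (n:ℝ) := by exact_mod_cast hn
    field_simp
  have hLHS : Tendsto (fun n : ℕ =>
      (1 / ((n : ℝ) + 1)) * (Real.log (Fp (s 0, s 1)) + Real.log (Fm (s 0, s 1))
        + Real.log (partitionW Fp Fm s' n))) atTop (nhds (Glim Fp Fm s')) := by
    have h := hconst.add hmain
    rw [zero_add] at h
    refine h.congr fun n => ?_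
    ring
  exact le_of_tendsto_of_tendsto' hLHS hRHS key

end fekete

section measurability

variable {S : Type*} [MeasurableSpace S] {Fp Fm : S × S → ℝ} {c C : ℝ}

lemma measurable_pathWeight (hFp : Measurable Fp) (hFm : Measurable Fm) (k : ℕ)
    (e : ℕ → Bool) : Measurable (fun s : ℕ → S => pathWeight Fp Fm s k e) := by
  unfold pathWeight
  refine Finset.measurable_prod _ fun i _ => ?_
  have hco : Measurable (fun s : ℕ → S => (s (pathPos e i - 1).toNat, s (pathPos e i).toNat)) :=
    (measurable_pi_apply _).prodMk (measurable_pi_apply _)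
  by_cases h : e i = true
  · simp only [h, if_true]
    exact hFp.comp hco
  · simp only [h, if_false]
    exact hFm.comp hco

lemma measurable_partitionW (hFp : Measurable Fp) (hFm : Measurable Fm) (k : ℕ) :
    Measurable (fun s : ℕ → S => partitionW Fp Fm s k) := by
  unfold partitionW
  refine Finset.measurable_sum _ fun ε _ => ?_
  by_cases h : (fun j => if h : j < 2 * k + 1 then ε ⟨j, h⟩ else false)
      ∈ {ε' : ℕ → Bool | validPath k ε'}
  · have he : (fun s : ℕ → S => Set.indicator {ε' : ℕ → Bool | validPath k ε'}
        (pathWeight Fp Fm s k) (fun j => if h : j < 2 * k + 1 then ε ⟨j, h⟩ else false))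
        = fun s : ℕ → S =>
          pathWeight Fp Fm s k (fun j => if h : j < 2 * k + 1 then ε ⟨j, h⟩ else false) :=
      funext fun s => Set.indicator_of_mem h _
    rw [he]
    exact measurable_pathWeight hFp hFm k _
  · have he : (fun s : ℕ → S => Set.indicator {ε' : ℕ → Bool | validPath k ε'}
        (pathWeight Fp Fm s k) (fun j => if h : j < 2 * k + 1 then ε ⟨j, h⟩ else false))
        = fun _ : ℕ → S => (0 : ℝ) :=
      funext fun s => Set.indicator_of_notMem h _
    rw [he]
    exact measurable_const

lemma measurable_Glim (hc : 0 < c) (hcC : c ≤ C) (hFpbd : ∀ y, Fp y ∈ Set.Icc c C)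
    (hFmbd : ∀ y, Fm y ∈ Set.Icc c C) (hFp : Measurable Fp) (hFm : Measurable Fm) :
    Measurable (Glim Fp Fm : (ℕ → S) → ℝ) := by
  refine measurable_of_tendsto_metrizable'
    (f := fun (k : ℕ) (s : ℕ → S) => (1 / (k : ℝ)) * Real.log (partitionW Fp Fm s k)) atTop
    (fun k => measurable_const.mul (Real.measurable_log.comp (measurable_partitionW hFp hFm k)))
    ?_
  rw [tendsto_pi_nhds]
  exact fun s => tendsto_Glim hc hcC hFpbd hFmbd s

/-- The tail-measurable a.s. limit. -/
noncomputable def Tlim (Fp Fm : S × S → ℝ) (s : ℕ → S) : ℝ :=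
  ⨅ n : ℕ, Glim Fp Fm (fun i => s (i + n))

lemma Glim_shift_antitone (hc : 0 < c) (hcC : c ≤ C) (hFpbd : ∀ y, Fp y ∈ Set.Icc c C)
    (hFmbd : ∀ y, Fm y ∈ Set.Icc c C) (s : ℕ → S) :
    Antitone (fun n : ℕ => Glim Fp Fm (fun i => s (i + n))) := by
  refine antitone_nat_of_succ_le fun n => ?_
  have h := Glim_shift_le hc hcC hFpbd hFmbd (fun i => s (i + n))
  refine le_trans (le_of_eq ?_) h
  congr 1
  funext i
  congr 1
  omega

lemma Glim_shift_bddBelow (hc : 0 < c) (hcC : c ≤ C) (hFpbd : ∀ y, Fp y ∈ Set.Icc c C)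
    (hFmbd : ∀ y, Fm y ∈ Set.Icc c C) (s : ℕ → S) :
    BddBelow (Set.range fun n : ℕ => Glim Fp Fm (fun i => s (i + n))) := by
  refine ⟨-(3 * (|Real.log c| + |Real.log (2 * C)|)), ?_⟩
  rintro x ⟨n, rfl⟩
  have := Glim_abs_le hc hcC hFpbd hFmbd (fun i => s (i + n))
  have := neg_abs_le (Glim Fp Fm (fun i => s (i + n)))
  dsimp only
  linarith

lemma tendsto_Tlim (hc : 0 < c) (hcC : c ≤ C) (hFpbd : ∀ y, Fp y ∈ Set.Icc c C)
    (hFmbd : ∀ y, Fm y ∈ Set.Icc c C) (s : ℕ → S) :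
    Tendsto (fun n : ℕ => Glim Fp Fm (fun i => s (i + n))) atTop (nhds (Tlim Fp Fm s)) :=
  tendsto_atTop_ciInf (Glim_shift_antitone hc hcC hFpbd hFmbd s)
    (Glim_shift_bddBelow hc hcC hFpbd hFmbd s)

lemma Tlim_abs_le (hc : 0 < c) (hcC : c ≤ C) (hFpbd : ∀ y, Fp y ∈ Set.Icc c C)
    (hFmbd : ∀ y, Fm y ∈ Set.Icc c C) (s : ℕ → S) :
    |Tlim Fp Fm s| ≤ 3 * (|Real.log c| + |Real.log (2 * C)|) := by
  have h := (tendsto_Tlim hc hcC hFpbd hFmbd s).abs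
  refine le_of_tendsto h (Eventually.of_forall fun n => ?_)
  exact Glim_abs_le hc hcC hFpbd hFmbd _

end measurability

section probability

open MeasurableSpace

/-- A bounded measurable function whose sublevel events all have probability zero or one is
a.s. constant. -/
lemma ae_eq_const_of_01 {Ω : Type*} [MeasurableSpace Ω] (μ : Measure Ω)
    [IsProbabilityMeasure μ] {f : Ω → ℝ} (hf : Measurable f) {Mb : ℝ}
    (hbd : ∀ ω, |f ω| ≤ Mb)
    (h01 : ∀ t : ℝ, μ {ω | f ω ≤ t} = 0 ∨ μ {ω | f ω ≤ t} = 1) :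
    ∃ Θ : ℝ, ∀ᵐ ω ∂μ, f ω = Θ := by
  set Sset := {t : ℝ | μ {ω | f ω ≤ t} = 1} with hSset
  have hSne : Mb ∈ Sset := by
    have huniv : {ω | f ω ≤ Mb} = Set.univ :=
      Set.eq_univ_of_forall fun ω => le_trans (le_abs_self _) (hbd ω)
    show μ {ω | f ω ≤ Mb} = 1
    rw [huniv]
    exact measure_univ
  have hbdd : BddBelow Sset := by
    refine ⟨-Mb - 1, fun t ht => ?_⟩
    by_contra hcon
    push_neg at hcon
    have hempty : {ω | f ω ≤ t} = ∅ := by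
      refine Set.eq_empty_of_forall_notMem fun ω hω => ?_
      have h1 : -Mb ≤ f ω := (abs_le.1 (hbd ω)).1
      have : f ω ≤ t := hω
      linarith
    have ht' : μ {ω | f ω ≤ t} = 1 := ht
    rw [hempty] at ht'
    simp at ht'
  refine ⟨sInf Sset, ?_⟩
  have hmem : ∀ t, sInf Sset < t → μ {ω | f ω ≤ t} = 1 := by
    intro t ht
    obtain ⟨b, hb, hbt⟩ := (csInf_lt_iff hbdd ⟨Mb, hSne⟩).1 ht
    have hsub : {ω | f ω ≤ b} ⊆ {ω | f ω ≤ t} := fun ω hω => le_trans hω hbt.le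
    have hmono := measure_mono (μ := μ) hsub
    have hb' : μ {ω | f ω ≤ b} = 1 := hb
    rw [hb'] at hmono
    exact le_antisymm prob_le_one hmono
  have hlt : ∀ q : ℝ, q < sInf Sset → μ {ω | f ω ≤ q} = 0 := by
    intro q hq
    rcases h01 q with h | h
    · exact h
    · exact absurd (csInf_le hbdd h) (not_le.2 hq)
  have hup : μ {ω | sInf Sset < f ω} = 0 := by
    have hsub : {ω | sInf Sset < f ω}
        ⊆ ⋃ (q : ℚ) (_ : sInf Sset < (q : ℝ)), {ω | f ω ≤ (q : ℝ)}ᶜ := by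
      intro ω hω
      obtain ⟨q, hq1, hq2⟩ := exists_rat_btwn (show sInf Sset < f ω from hω)
      simp only [Set.mem_iUnion]
      exact ⟨q, hq1, by simpa using not_le.2 hq2⟩
    refine measure_mono_null hsub
      (measure_iUnion_null fun q => measure_iUnion_null fun hq => ?_)
    rw [prob_compl_eq_zero_iff (show MeasurableSet {ω | f ω ≤ (q : ℝ)} from hf measurableSet_Iic)]
    exact hmem _ hq
  have hdown : μ {ω | f ω < sInf Sset} = 0 := by
    have hsub : {ω | f ω < sInf Sset}
        ⊆ ⋃ (q : ℚ) (_ : (q : ℝ) < sInf Sset), {ω | f ω ≤ (q : ℝ)} := by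
      intro ω hω
      obtain ⟨q, hq1, hq2⟩ := exists_rat_btwn (show f ω < sInf Sset from hω)
      simp only [Set.mem_iUnion]
      exact ⟨q, hq2, hq1.le⟩
    exact measure_mono_null hsub
      (measure_iUnion_null fun q => measure_iUnion_null fun hq => hlt _ hq)
  have hne : μ {ω | f ω ≠ sInf Sset} = 0 := by
    refine measure_mono_null (fun ω hω => ?_) (measure_union_null hdown hup)
    rcases lt_or_gt_of_ne hω with h | h
    · exact Or.inl h
    · exact Or.inr h
  rw [ae_iff]
  exact hne

variable {Ω S : Type*} [MeasurableSpace Ω] [MeasurableSpace S]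
  {μ : Measure Ω} [IsProbabilityMeasure μ] {X : ℕ → Ω → S}

lemma law_shift (hXmeas : ∀ i, Measurable (X i))
    (hindep : iIndepFun X μ)
    (hident : ∀ i, Measure.map (X i) μ = Measure.map (X 0) μ) (n : ℕ) :
    Measure.map (fun ω => fun i => X (i + n) ω) μ
      = Measure.map (fun ω => fun i => X i ω) μ := by
  have hH : ∀ m : ℕ, Measurable (fun ω => fun i => X (i + m) ω) :=
    fun m => measurable_pi_lambda _ fun i => hXmeas _
  have hHI : ∀ (m : ℕ) (I : Finset ℕ), Measurable (fun ω => fun i : I => X (i.val + m) ω) :=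
    fun m I => measurable_pi_lambda _ fun i => hXmeas _
  -- equality of finite-dimensional distributions
  have hfin : ∀ (m : ℕ) (I : Finset ℕ),
      Measure.map (fun ω => fun i : I => X (i.val + m) ω) μ
        = Measure.map (fun ω => fun i : I => X (i.val + 0) ω) μ := by
    intro m I
    haveI p1 : IsProbabilityMeasure (Measure.map (fun ω => fun i : I => X (i.val + m) ω) μ) :=
      Measure.isProbabilityMeasure_map (hHI m I).aemeasurable
    haveI p2 : IsProbabilityMeasure (Measure.map (fun ω => fun i : I => X (i.val + 0) ω) μ) :=
      Measure.isProbabilityMeasure_map (hHI 0 I).aemeasurable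
    refine ext_of_generate_finite _ generateFrom_pi.symm isPiSystem_pi ?_
      (by rw [measure_univ, measure_univ])
    rintro A ⟨t, ht, rfl⟩
    have ht' : ∀ i : I, MeasurableSet (t i) := fun i => ht i (Set.mem_univ i)
    have hA : MeasurableSet (Set.pi Set.univ t) := MeasurableSet.univ_pi ht'
    classical
    set t2 : ℕ → Set S := fun j => if h : j ∈ I then t ⟨j, h⟩ else Set.univ with ht2
    have ht2m : ∀ j, MeasurableSet (t2 j) := by
      intro j
      by_cases h : j ∈ I
      · simp only [ht2, dif_pos h]; exact ht' _
      · simp only [ht2, dif_neg h]; exact MeasurableSet.univ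
    have calc1 : ∀ p : ℕ,
        μ ((fun ω => fun i : I => X (i.val + p) ω) ⁻¹' Set.pi Set.univ t)
          = ∏ i ∈ I, (Measure.map (X 0) μ) (t2 i) := by
      intro p
      have hpre : (fun ω => fun i : I => X (i.val + p) ω) ⁻¹' Set.pi Set.univ t
          = ⋂ j ∈ Finset.image (· + p) I, X j ⁻¹' (fun j' => t2 (j' - p)) j := by
        ext ω
        simp only [Set.mem_preimage, Set.mem_pi, Set.mem_univ, forall_true_left,
          Set.mem_iInter, Finset.mem_image]
        constructor
        · rintro h j ⟨i, hiI, rfl⟩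
          have hsub : i + p - p = i := by omega
          show X (i + p) ω ∈ t2 (i + p - p)
          rw [hsub]
          simp only [ht2, dif_pos hiI]
          exact h ⟨i, hiI⟩
        · intro h i
          have h2 := h (i.val + p) ⟨i.val, i.2, rfl⟩
          have hsub : i.val + p - p = i.val := by omega
          rw [hsub] at h2
          simp only [ht2, dif_pos i.2] at h2
          exact h2
      have hprod := hindep.measure_inter_preimage_eq_mul
        (Finset.image (· + p) I) (sets := fun j => t2 (j - p)) (fun j _ => ht2m _)
      rw [hpre, hprod, Finset.prod_image (fun i _ j _ h => by omega)]
      refine Finset.prod_congr rfl fun i _ => ?_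
      show μ (X (i + p) ⁻¹' t2 (i + p - p)) = (Measure.map (X 0) μ) (t2 i)
      have hsub : i + p - p = i := by omega
      rw [hsub, ← Measure.map_apply (hXmeas _) (ht2m i), hident (i + p)]
    rw [Measure.map_apply (hHI m I) hA, Measure.map_apply (hHI 0 I) hA, calc1 m, calc1 0]
  -- π-system of cylinders
  haveI h1 : IsProbabilityMeasure (Measure.map (fun ω => fun i => X (i + n) ω) μ) :=
    Measure.isProbabilityMeasure_map (hH n).aemeasurable
  haveI h2 : IsProbabilityMeasure (Measure.map (fun ω => fun i => X i ω) μ) :=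
    Measure.isProbabilityMeasure_map (measurable_pi_lambda _ fun i => hXmeas i).aemeasurable
  refine ext_of_generate_finite _ generateFrom_measurableCylinders.symm
    isPiSystem_measurableCylinders ?_ (by simp)
  rintro A hA
  obtain ⟨I, Sset, hSm, rfl⟩ := (mem_measurableCylinders _).1 hA
  rw [Measure.map_apply (hH n) hSm.cylinder,
    Measure.map_apply (measurable_pi_lambda _ fun i => hXmeas i) hSm.cylinder]
  have hc1 : (fun ω => fun i => X (i + n) ω) ⁻¹' cylinder I Sset
      = (fun ω => fun i : I => X (i.val + n) ω) ⁻¹' Sset := rfl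
  have hc2 : (fun ω => fun i => X i ω) ⁻¹' cylinder I Sset
      = (fun ω => fun i : I => X (i.val + 0) ω) ⁻¹' Sset := rfl
  rw [hc1, hc2, ← Measure.map_apply (hHI n I) hSm, ← Measure.map_apply (hHI 0 I) hSm, hfin n I]

end probability

end Stmt7Aux

open Stmt7Aux in
set_option maxHeartbeats 1000000 in
/-- For an i.i.d. sequence `(X_i)` and measurable weight functions `F₊, F₋` with values in
`[c, C]`, `0 < c ≤ C < ∞`, there is a deterministic `Θ ∈ ℝ` with
`(1/k)·ln W_k → Θ` almost surely. -/
theorem stmt7 {Ω S : Type*} [MeasurableSpace Ω] [MeasurableSpace S]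
    (μ : Measure Ω) [IsProbabilityMeasure μ]
    (X : ℕ → Ω → S) (hXmeas : ∀ i, Measurable (X i))
    (hindep : iIndepFun X μ)
    (hident : ∀ i, Measure.map (X i) μ = Measure.map (X 0) μ)
    (Fp Fm : S × S → ℝ) (hFp : Measurable Fp) (hFm : Measurable Fm)
    (c C : ℝ) (hc : 0 < c) (hcC : c ≤ C)
    (hFpbd : ∀ y, Fp y ∈ Set.Icc c C) (hFmbd : ∀ y, Fm y ∈ Set.Icc c C) :
    ∃ Θ : ℝ, ∀ᵐ ω ∂μ,
      Tendsto (fun k : ℕ => (1 / (k : ℝ)) * Real.log (partitionW Fp Fm (fun i => X i ω) k))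
        atTop (nhds Θ) := by
  classical
  have hGm : Measurable (Glim Fp Fm : (ℕ → S) → ℝ) :=
    measurable_Glim hc hcC hFpbd hFmbd hFp hFm
  set Mb := 3 * (|Real.log c| + |Real.log (2 * C)|) with hMb
  set L : ℕ → Ω → ℝ := fun n ω => Glim Fp Fm (fun i => X (i + n) ω) with hLdef
  have hHmeas : ∀ n : ℕ, Measurable (fun ω => fun i : ℕ => X (i + n) ω) :=
    fun n => measurable_pi_lambda _ fun i => hXmeas _
  have hLmeas : ∀ n, Measurable (L n) := fun n => hGm.comp (hHmeas n)
  have hLbd : ∀ n ω, |L n ω| ≤ Mb := fun n ω => Glim_abs_le hc hcC hFpbd hFmbd _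
  have hLint : ∀ n, Integrable (L n) μ := fun n =>
    ⟨(hLmeas n).aestronglyMeasurable,
      HasFiniteIntegral.of_bounded (C := Mb)
        (Eventually.of_forall fun ω => by
          simpa [Real.norm_eq_abs] using hLbd n ω)⟩
  have hInt_eq : ∀ n, ∫ ω, L n ω ∂μ = ∫ ω, L 0 ω ∂μ := by
    intro n
    have h1 : ∫ ω, L n ω ∂μ
        = ∫ s, Glim Fp Fm s ∂(Measure.map (fun ω => fun i => X (i + n) ω) μ) :=
      (integral_map (hHmeas n).aemeasurable hGm.aestronglyMeasurable).symm
    rw [h1, law_shift hXmeas hindep hident n]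
    exact integral_map (measurable_pi_lambda _ fun i => hXmeas i).aemeasurable
      hGm.aestronglyMeasurable
  have hmono : ∀ (n : ℕ) (ω : Ω), L (n + 1) ω ≤ L n ω := by
    intro n ω
    have h := Glim_shift_le hc hcC hFpbd hFmbd (fun i => X (i + n) ω)
    refine le_trans (le_of_eq ?_) h
    show Glim Fp Fm (fun i => X (i + (n + 1)) ω) = Glim Fp Fm (fun i => X (i + 1 + n) ω)
    congr 1
    funext i
    congr 1
    omega
  have hae : ∀ n : ℕ, L n =ᵐ[μ] L (n + 1) := by
    intro n
    have hnn : 0 ≤ᵐ[μ] fun ω => L n ω - L (n + 1) ω :=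
      Eventually.of_forall fun ω => sub_nonneg.2 (hmono n ω)
    have hint : Integrable (fun ω => L n ω - L (n + 1) ω) μ := (hLint n).sub (hLint (n + 1))
    have hzero : ∫ ω, (L n ω - L (n + 1) ω) ∂μ = 0 := by
      rw [integral_sub (hLint n) (hLint (n + 1)), hInt_eq n, hInt_eq (n + 1), sub_self]
    have hres := (integral_eq_zero_iff_of_nonneg_ae hnn hint).1 hzero
    filter_upwards [hres] with ω hω
    have : L n ω - L (n + 1) ω = 0 := hω
    linarith
  have haeall : ∀ᵐ ω ∂μ, ∀ n, L n ω = L 0 ω := by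
    refine ae_all_iff.2 fun n => ?_
    induction n with
    | zero => exact Eventually.of_forall fun _ => rfl
    | succ k ih =>
      filter_upwards [ih, hae k] with ω h1 h2
      rw [← h2]
      exact h1
  have hTlim_eq : ∀ᵐ ω ∂μ, Tlim Fp Fm (fun i => X i ω) = L 0 ω := by
    filter_upwards [haeall] with ω hω
    have ht := tendsto_Tlim hc hcC hFpbd hFmbd (fun i => X i ω)
    have hconst : Tendsto (fun n : ℕ => Glim Fp Fm (fun i => X (i + n) ω)) atTop
        (nhds (L 0 ω)) := by
      have heq : (fun n : ℕ => Glim Fp Fm (fun i => X (i + n) ω)) = fun _ => L 0 ω :=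
        funext fun n => hω n
      rw [heq]
      exact tendsto_const_nhds
    exact tendsto_nhds_unique ht hconst
  -- the function and its tail measurability
  set f : Ω → ℝ := fun ω => Tlim Fp Fm (fun i => X i ω) with hfdef
  have hTm : Measurable (Tlim Fp Fm : (ℕ → S) → ℝ) := by
    refine measurable_of_tendsto_metrizable'
      (f := fun (n : ℕ) (s : ℕ → S) => Glim Fp Fm (fun i => s (i + n))) atTop
      (fun n => hGm.comp (measurable_pi_lambda _ fun i => measurable_pi_apply _)) ?_
    rw [tendsto_pi_nhds]
    exact fun s => tendsto_Tlim hc hcC hFpbd hFmbd s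
  have hfmeas : Measurable f := hTm.comp (measurable_pi_lambda _ fun i => hXmeas i)
  have h01 : ∀ t : ℝ, μ {ω | f ω ≤ t} = 0 ∨ μ {ω | f ω ≤ t} = 1 := by
    intro t
    refine ProbabilityTheory.measure_zero_or_one_of_measurableSet_limsup_atTop
      (s := fun n => MeasurableSpace.comap (X n) inferInstance)
      (fun n => (hXmeas n).comap_le) hindep ?_
    rw [limsup_eq_iInf_iSup_of_nat]
    refine MeasurableSpace.measurableSet_iInf.2 fun N => ?_
    set mN := ⨆ i, ⨆ (_ : i ≥ N), MeasurableSpace.comap (X i) (inferInstance : MeasurableSpace S)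
      with hmN
    have hXj : ∀ j, N ≤ j → @Measurable Ω S mN _ (X j) := by
      intro j hj A hA
      have hle : MeasurableSpace.comap (X j) (inferInstance : MeasurableSpace S) ≤ mN :=
        le_iSup₂ (f := fun i (_ : i ≥ N) =>
          MeasurableSpace.comap (X i) (inferInstance : MeasurableSpace S)) j hj
      exact hle _ ⟨A, hA, rfl⟩
    have hHN : ∀ nn : ℕ, @Measurable Ω (ℕ → S) mN _ (fun ω => fun i => X (i + nn + N) ω) :=
      fun nn => measurable_pi_lambda _ fun i => hXj _ (by omega)
    have hfN : @Measurable Ω ℝ mN _ f := by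
      refine measurable_of_tendsto_metrizable'
        (f := fun (nn : ℕ) (ω : Ω) => Glim Fp Fm (fun i => X (i + nn + N) ω)) atTop
        (fun nn => hGm.comp (hHN nn)) ?_
      rw [tendsto_pi_nhds]
      intro ω
      have h := (tendsto_Tlim hc hcC hFpbd hFmbd (fun i => X i ω)).comp
        (tendsto_add_atTop_nat N)
      refine h.congr fun nn => ?_
      show Glim Fp Fm (fun i => X (i + (nn + N)) ω) = Glim Fp Fm (fun i => X (i + nn + N) ω)
      congr 1
      funext i
      congr 1
      omega
    exact hfN measurableSet_Iic
  obtain ⟨Θ, hΘ⟩ := ae_eq_const_of_01 μ hfmeas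
    (fun ω => Tlim_abs_le hc hcC hFpbd hFmbd _) h01
  refine ⟨Θ, ?_⟩
  filter_upwards [hΘ, hTlim_eq] with ω h1 h2
  have ht := tendsto_Glim hc hcC hFpbd hFmbd (fun i => X i ω)
  have hG : Glim Fp Fm (fun i => X i ω) = Θ := by
    rw [show Glim Fp Fm (fun i => X i ω) = L 0 ω from rfl, ← h2]
    exact h1
  rw [← hG]
  exact ht
end

section
/- Suppose in addition that β > max(η_c, −μ(0)/μ′(0)). Then the equation c·I(1/c) = β has a unique solution c* ∈ (0,∞). Moreover: (1) c* > 1/μ′(0); (2) c·I(1/c) < β for every c ∈ (0, c*) and c·I(1/c) > β for every c ∈ (c*, ∞); (3) the function c ↦ c·I(1/c) is monotonically non-decreasing on (c*, ∞). -/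
open Filter Set Pointwise

/-- The Legendre transform `I(a) = sup_{η < η_c} (a·η − μ(η))`. -/
noncomputable def legendreI (μ : ℝ → ℝ) (ηc : ℝ) (a : ℝ) : ℝ :=
  sSup ((fun η => a * η - μ η) '' Set.Iio ηc)

/-- If `β > max(η_c, −μ(0)/μ'(0))` then `c·I(1/c) = β` has a unique positive solution `c*`;
moreover `c* > 1/μ'(0)`, `c·I(1/c) < β` for `0 < c < c*`, `c·I(1/c) > β` for `c > c*`, and
`c ↦ c·I(1/c)` is monotone non-decreasing on `(c*, ∞)`. -/
theorem stmt10 (μ μ' : ℝ → ℝ) (ηc : ℝ) (hηc : 0 < ηc)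
    (hconv : ConvexOn ℝ (Set.Iio ηc) μ)
    (hderiv : ∀ η < ηc, HasDerivAt μ (μ' η) η)
    (hcont : ContinuousOn μ' (Set.Iio ηc))
    (hpos : ∀ η < ηc, 0 < μ' η)
    (hmono : StrictMonoOn μ' (Set.Iio ηc))
    (hlim0 : Tendsto μ' atBot (nhds 0))
    (hμ0 : μ 0 ≤ 0)
    (hμbot : Tendsto μ atBot atBot)
    (β : ℝ) (hβ : max ηc (-μ 0 / μ' 0) < β) :
    ∃ cstar : ℝ, 0 < cstar ∧ cstar * legendreI μ ηc (1 / cstar) = β ∧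
      (∀ c, 0 < c → c * legendreI μ ηc (1 / c) = β → c = cstar) ∧
      1 / μ' 0 < cstar ∧
      (∀ c, 0 < c → c < cstar → c * legendreI μ ηc (1 / c) < β) ∧
      (∀ c, cstar < c → β < c * legendreI μ ηc (1 / c)) ∧
      MonotoneOn (fun c => c * legendreI μ ηc (1 / c)) (Set.Ioi cstar) := by
  have h0mem : (0 : ℝ) ∈ Iio ηc := hηc
  have hμ'0 : 0 < μ' 0 := hpos 0 hηc
  have hβ1 : ηc < β := lt_of_le_of_lt (le_max_left _ _) hβ
  have hβ2 : -μ 0 / μ' 0 < β := lt_of_le_of_lt (le_max_right _ _) hβ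
  -- continuity and strict monotonicity of μ on (-∞, ηc)
  have hμcont : ContinuousOn μ (Iio ηc) := fun x hx =>
    (hderiv x hx).continuousAt.continuousWithinAt
  have hμsm : StrictMonoOn μ (Iio ηc) := by
    apply strictMonoOn_of_deriv_pos (convex_Iio ηc) hμcont
    intro x hx
    rw [interior_Iio] at hx
    rw [(hderiv x hx).deriv]
    exact hpos x hx
  -- tangent line inequality
  have htang : ∀ x ∈ Iio ηc, ∀ y ∈ Iio ηc, μ x + μ' x * (y - x) ≤ μ y := by
    intro x hx y hy
    rcases lt_trichotomy x y with hxy | rfl | hxy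
    · obtain ⟨ξ, hξ, hs⟩ := exists_hasDerivAt_eq_slope μ μ' hxy
        (hμcont.mono fun z hz => lt_of_le_of_lt hz.2 hy)
        (fun z hz => hderiv z (lt_trans hz.2 hy))
      have hξc : ξ < ηc := lt_trans hξ.2 hy
      have h1 : μ' x ≤ μ' ξ := (hmono hx hξc hξ.1).le
      have h2 : μ' ξ * (y - x) = μ y - μ x := by
        rw [hs]; exact div_mul_cancel₀ _ (sub_ne_zero.2 hxy.ne')
      nlinarith [sub_pos.2 hxy]
    · simp
    · obtain ⟨ξ, hξ, hs⟩ := exists_hasDerivAt_eq_slope μ μ' hxy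
        (hμcont.mono fun z hz => lt_of_le_of_lt hz.2 hx)
        (fun z hz => hderiv z (lt_trans hz.2 hx))
      have hξc : ξ < ηc := lt_trans hξ.2 hx
      have h1 : μ' ξ ≤ μ' x := (hmono hξc hx hξ.2).le
      have h2 : μ' ξ * (x - y) = μ x - μ y := by
        rw [hs]; exact div_mul_cancel₀ _ (sub_ne_zero.2 hxy.ne')
      nlinarith [sub_pos.2 hxy]
  set G : ℝ → ℝ := fun c => sSup ((fun η => η - c * μ η) '' Iio ηc) with hGdef
  have hne : ∀ c : ℝ, ((fun η => η - c * μ η) '' Iio ηc).Nonempty :=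
    fun c => ⟨_, ⟨ηc - 1, by simp, rfl⟩⟩
  -- boundedness above
  have hbdd : ∀ c : ℝ, 0 < c → BddAbove ((fun η => η - c * μ η) '' Iio ηc) := by
    intro c hc
    obtain ⟨b, hb⟩ := eventually_atBot.mp (hlim0.eventually_lt_const (show (0:ℝ) < 1 / c by positivity))
    set η0 : ℝ := min b (-1) with hη0def
    have hη0c : η0 < ηc := lt_of_le_of_lt (min_le_right _ _) (by linarith)
    have hη0' : μ' η0 < 1 / c := hb η0 (min_le_left _ _)
    have hcμ' : c * μ' η0 < 1 := by
      have := (mul_lt_mul_of_pos_left hη0' hc)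
      rwa [mul_one_div, div_self hc.ne'] at this
    refine ⟨ηc - c * μ η0, ?_⟩
    rintro z ⟨η, hη, rfl⟩
    rcases le_or_gt η0 η with hle | hlt
    · have h1 : μ η0 ≤ μ η := by
        rcases eq_or_lt_of_le hle with rfl | h; · exact le_refl _
        · exact (hμsm hη0c hη h).le
      have := mul_le_mul_of_nonneg_left h1 hc.le
      simp only []
      nlinarith [hη.out]
    · have h1 := htang η0 hη0c η (lt_trans hlt hη0c)
      have h2 := mul_le_mul_of_nonneg_left h1 hc.le
      simp only []
      nlinarith [mul_nonneg (sub_nonneg.2 hcμ'.le) (sub_nonneg.2 hlt.le)]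
  -- relation with legendreI
  have hGI : ∀ c : ℝ, 0 < c → c * legendreI μ ηc (1 / c) = G c := by
    intro c hc
    have himg : (fun η => η - c * μ η) '' Iio ηc
        = c • ((fun η => (1 / c) * η - μ η) '' Iio ηc) := by
      rw [← Set.image_smul, Set.image_image]
      refine Set.image_congr fun η _ => ?_
      rw [smul_eq_mul]
      field_simp
    show c * sSup ((fun η => (1 / c) * η - μ η) '' Iio ηc) = G c
    rw [hGdef]
    simp only []
    rw [himg, Real.sSup_smul_of_nonneg hc.le, smul_eq_mul]
  -- G is convex on (0, ∞)
  have hGconv : ConvexOn ℝ (Ioi 0) G := by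
    refine ⟨convex_Ioi 0, fun x hx y hy a b ha hb hab => ?_⟩
    simp only [smul_eq_mul, hGdef]
    refine csSup_le (hne _) ?_
    rintro z ⟨η, hη, rfl⟩
    have h1 : η - x * μ η ≤ G x := le_csSup (hbdd x hx) ⟨η, hη, rfl⟩
    have h2 : η - y * μ η ≤ G y := le_csSup (hbdd y hy) ⟨η, hη, rfl⟩
    have key : η - (a * x + b * y) * μ η = a * (η - x * μ η) + b * (η - y * μ η) := by
      linear_combination (-η) * hab
    show η - (a * x + b * y) * μ η ≤ a * G x + b * G y
    rw [key]
    exact add_le_add (mul_le_mul_of_nonneg_left h1 ha) (mul_le_mul_of_nonneg_left h2 hb)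
  have hGcont : ContinuousOn G (Ioi 0) := hGconv.continuousOn isOpen_Ioi
  set d : ℝ := 1 / μ' 0 with hddef
  have hd : 0 < d := by positivity
  -- G c < β for 0 < c ≤ d
  have hsmall : ∀ c : ℝ, 0 < c → c ≤ d → G c < β := by
    intro c hc hcd
    have hct : c * μ' 0 ≤ 1 := by
      rw [hddef, le_div_iff₀ hμ'0] at hcd
      linarith
    have hbval : G c ≤ (1 - c * μ' 0) * ηc - c * μ 0 := by
      refine csSup_le (hne c) ?_
      rintro z ⟨η, hη, rfl⟩
      have h1 := htang 0 h0mem η hη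
      have h2 := mul_le_mul_of_nonneg_left h1 hc.le
      show η - c * μ η ≤ (1 - c * μ' 0) * ηc - c * μ 0
      nlinarith [mul_nonneg (sub_nonneg.2 hct) (sub_nonneg.2 hη.out.le)]
    have hneg : -μ 0 < β * μ' 0 := by
      rw [div_lt_iff₀ hμ'0] at hβ2
      linarith
    nlinarith [mul_lt_mul_of_pos_left hneg hc,
      mul_nonneg (sub_nonneg.2 hct) (sub_nonneg.2 hβ1.le)]
  -- some c with G c > β
  have hm1mem : (-1 : ℝ) ∈ Iio ηc := by simp only [mem_Iio]; linarith
  have hμm1 : μ (-1) < 0 := lt_of_lt_of_le (hμsm hm1mem h0mem (by norm_num)) hμ0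
  -- the set A and c*
  set A : Set ℝ := {c | d ≤ c ∧ β ≤ G c} with hAdef
  have hAbdd : BddBelow A := ⟨d, fun x hx => hx.1⟩
  have hAne : A.Nonempty := by
    set m : ℝ := -μ (-1) with hmdef
    have hm : 0 < m := by rw [hmdef]; linarith
    set c1 : ℝ := max (d + 1) ((β + 2) / m) with hc1def
    have hc1d : d + 1 ≤ c1 := le_max_left _ _
    have hc1pos : 0 < c1 := by linarith
    have hc1m : β + 2 ≤ c1 * m := by
      rw [← div_le_iff₀ hm]
      exact le_max_right _ _
    refine ⟨c1, by linarith, ?_⟩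
    have h1 : (-1 : ℝ) - c1 * μ (-1) ≤ G c1 := le_csSup (hbdd c1 hc1pos) ⟨-1, hm1mem, rfl⟩
    have : c1 * μ (-1) = -(c1 * m) := by rw [hmdef]; ring
    nlinarith
  have hAclosed : IsClosed A := by
    have : A = Ici d ∩ G ⁻¹' Ici β := by
      ext c; simp [hAdef, mem_Ici, and_comm]
    rw [this]
    exact (hGcont.mono fun x hx => lt_of_lt_of_le hd hx).preimage_isClosed_of_isClosed
      isClosed_Ici isClosed_Ici
  set cstar : ℝ := sInf A with hcsdef
  have hcA : cstar ∈ A := hAclosed.csInf_mem hAne hAbdd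
  have hGd : G d < β := hsmall d hd le_rfl
  have hdlt : d < cstar := by
    rcases eq_or_lt_of_le hcA.1 with h | h
    · exact absurd hcA.2 (not_le.2 (h ▸ hGd))
    · exact h
  have hc0 : 0 < cstar := lt_trans hd hdlt
  -- G cstar = β via IVT
  have hGcstar : G cstar = β := by
    have hsub : Icc d cstar ⊆ Ioi 0 := fun x hx => lt_of_lt_of_le hd hx.1
    obtain ⟨c, hcmem, hGc⟩ := intermediate_value_Icc hcA.1 (hGcont.mono hsub)
      ⟨hGd.le, hcA.2⟩
    have hcin : c ∈ A := ⟨hcmem.1, hGc.ge⟩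
    have h1 : cstar ≤ c := csInf_le hAbdd hcin
    have h2 : c = cstar := le_antisymm hcmem.2 h1
    rw [← h2]; exact hGc
  -- G c < β for 0 < c < cstar
  have hlt : ∀ c, 0 < c → c < cstar → G c < β := by
    intro c hc hcc
    rcases le_or_gt c d with h | h
    · exact hsmall c hc h
    · by_contra hge
      push_neg at hge
      exact absurd (csInf_le hAbdd ⟨h.le, hge⟩) (not_le.2 hcc)
  -- G c > β for c > cstar, via convexity
  have hgt : ∀ c, cstar < c → β < G c := by
    intro c hcc
    have hdc : d < c := lt_trans hdlt hcc
    have hden : 0 < c - d := by linarith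
    set a : ℝ := (c - cstar) / (c - d) with hadef
    set b : ℝ := (cstar - d) / (c - d) with hbdef
    have ha : 0 < a := div_pos (by linarith) hden
    have hb : 0 < b := div_pos (by linarith) hden
    have hab : a + b = 1 := by
      rw [hadef, hbdef, ← add_div, div_eq_one_iff_eq hden.ne']
      ring
    have hcomb : a • d + b • c = cstar := by
      simp only [smul_eq_mul, hadef, hbdef]
      field_simp
      ring
    have hcx := hGconv.2 (mem_Ioi.2 hd) (mem_Ioi.2 (lt_trans hd hdc)) ha.le hb.le hab
    rw [hcomb, hGcstar] at hcx
    simp only [smul_eq_mul] at hcx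
    have habβ : a * β + b * β = β := by rw [← add_mul, hab, one_mul]
    have h6 : b * β < b * G c := by
      linarith [mul_lt_mul_of_pos_left hGd ha]
    exact (mul_lt_mul_iff_right₀ hb).mp h6
  -- monotonicity of G on (cstar, ∞)
  have hmonG : MonotoneOn G (Ioi cstar) := by
    intro c hc c' hc' hcc'
    have hcb : β < G c := hgt c hc
    have hcpos : 0 < c := lt_trans hc0 hc
    have hc'pos : 0 < c' := lt_trans hc0 hc'
    refine le_of_forall_pos_le_add fun ε hε => ?_
    set ε' : ℝ := min ε (G c - ηc) with hε'def
    have hε' : 0 < ε' := lt_min hε (by linarith)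
    obtain ⟨z, hz, hzlt⟩ := exists_lt_of_lt_csSup (hne c)
      (show G c - ε' < G c by linarith)
    obtain ⟨η, hη, rfl⟩ := hz
    simp only [] at hzlt
    have hηlt : η - c * μ η > ηc := by
      have : ε' ≤ G c - ηc := min_le_right _ _
      linarith
    have hμη : μ η < 0 := by nlinarith [hη.out, hcpos]
    have h1 : η - c' * μ η ≤ G c' := le_csSup (hbdd c' hc'pos) ⟨η, hη, rfl⟩
    have h2 : η - c * μ η ≤ η - c' * μ η := by nlinarith [mul_nonneg (sub_nonneg.2 hcc') (neg_nonneg.2 hμη.le)]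
    have h3 : ε' ≤ ε := min_le_left _ _
    linarith
  -- assemble
  refine ⟨cstar, hc0, ?_, ?_, ?_, ?_, ?_, ?_⟩
  · rw [hGI cstar hc0]; exact hGcstar
  · intro c hc hceq
    rw [hGI c hc] at hceq
    rcases lt_trichotomy c cstar with h | h | h
    · exact absurd hceq (ne_of_lt (hlt c hc h))
    · exact h
    · exact absurd hceq.symm (ne_of_lt (hgt c h))
  · exact hdlt
  · intro c hc hcc
    rw [hGI c hc]
    exact hlt c hc hcc
  · intro c hc
    rw [hGI c (lt_trans hc0 hc)]
    exact hgt c hc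
  · intro c hc c' hc' hcc'
    simp only []
    rw [hGI c (lt_trans hc0 hc), hGI c' (lt_trans hc0 hc')]
    exact hmonG hc hc' hcc'
end

section
/- Suppose in addition that β > max(η_c, −μ(0)/μ′(0)), and let c* ∈ (0,∞) be the unique solution of c*·I(1/c*) = β. Then c* admits the variational representation c* = inf_{λ ∈ (0,∞)} (λ + β)/(−μ(−λ)). (Note that −μ(−λ) > 0 for every λ > 0, since μ is strictly increasing with μ(0) ≤ 0.) -/
/-!
Write `g(η) = η − c* μ(η)`. The equation `c* I(1/c*) = β` says `sup_{η < η_c} g = β`, and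
`(λ + β)/(−μ(−λ)) ≥ c*` is the inequality `g(−λ) ≤ β`, so `c*` bounds the family from below.
The tangent lines of the convex `μ` show that `g` is maximal where `μ′ = 1/c*`; the bound on `β`
forces `c* μ′(0) > 1`, so such a maximiser `η*` lies in `(−∞, 0)`, and `λ = −η*` attains `c*`.
-/

open Filter Set

section Convex

variable {S : Set ℝ} {f : ℝ → ℝ} {f' x y : ℝ}

theorem ConvexOn.add_mul_sub_le_of_hasDerivAt (hf : ConvexOn ℝ S f) (hx : x ∈ S) (hy : y ∈ S)
    (hf' : HasDerivAt f f' x) : f x + f' * (y - x) ≤ f y := by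
  rcases lt_trichotomy x y with hxy | rfl | hxy
  · have h := hf.le_slope_of_hasDerivAt hx hy hxy hf'
    rw [slope_def_field, le_div_iff₀ (sub_pos.2 hxy)] at h
    linarith
  · simp
  · have h := hf.slope_le_of_hasDerivAt hy hx hxy hf'
    rw [slope_def_field, div_le_iff₀ (sub_pos.2 hxy)] at h
    linarith

theorem ConvexOn.lt_of_hasDerivAt_pos (hf : ConvexOn ℝ S f) (hx : x ∈ S) (hy : y ∈ S)
    (hxy : x < y) (hf' : HasDerivAt f f' x) (hpos : 0 < f') : f x < f y := by
  have := hf.add_mul_sub_le_of_hasDerivAt hx hy hf'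
  nlinarith [mul_pos hpos (sub_pos.2 hxy)]

end Convex

theorem exists_lt_zero_eq_of_tendsto_atBot {f : ℝ → ℝ} {a : ℝ} (hf : ContinuousOn f (Iic 0))
    (hlim : Tendsto f atBot (nhds 0)) (ha : 0 < a) (h0 : a < f 0) : ∃ x < 0, f x = a := by
  obtain ⟨A, hfA, hA⟩ := ((hlim.eventually (eventually_lt_nhds ha)).and
    (eventually_lt_atBot 0)).exists
  obtain ⟨x, hx, hfx⟩ := intermediate_value_Ioo hA.le (hf.mono Icc_subset_Iic_self) ⟨hfA, h0⟩
  exact ⟨x, hx.2, hfx⟩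

/-- The positivity of `β` rules out the junk value `sSup = 0` of an unbounded set. -/
theorem isLUB_of_mul_legendreI_eq {μ : ℝ → ℝ} {ηc c β : ℝ} (hηc : (Iio ηc).Nonempty)
    (hc : 0 < c) (hβ : 0 < β) (h : c * legendreI μ ηc (1 / c) = β) :
    IsLUB ((fun η => η - c * μ η) '' Iio ηc) β := by
  set T := (fun η => 1 / c * η - μ η) '' Iio ηc
  have hT : sSup T = β / c := by rw [eq_div_iff hc.ne', mul_comm]; exact h
  have hbdd : BddAbove T := by
    by_contra hT'
    rw [Real.sSup_of_not_bddAbove hT'] at hT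
    exact (div_pos hβ hc).ne' hT.symm
  have hscale : (fun η => η - c * μ η) '' Iio ηc = OrderIso.mulLeft₀ c hc '' T := by
    rw [image_image]
    congr 1
    funext η
    simp only [OrderIso.mulLeft₀_apply]
    field_simp
  have hβc : OrderIso.mulLeft₀ c hc (β / c) = β := by
    simp only [OrderIso.mulLeft₀_apply]
    field_simp
  rw [hscale, ← hβc, OrderIso.isLUB_image']
  exact hT ▸ isLUB_csSup (hηc.image _) hbdd

section Speed

variable {μ μ' : ℝ → ℝ} {ηc c β : ℝ}

theorem isGreatest_sub_mul_of_deriv_eq (hconv : ConvexOn ℝ (Iio ηc) μ)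
    {ηs : ℝ} (hηs : ηs < ηc) (hderiv : HasDerivAt μ (1 / c) ηs) (hc : 0 < c) :
    IsGreatest ((fun η => η - c * μ η) '' Iio ηc) (ηs - c * μ ηs) := by
  refine ⟨mem_image_of_mem _ hηs, ?_⟩
  rintro _ ⟨η, hη, rfl⟩
  have htangent := hconv.add_mul_sub_le_of_hasDerivAt hηs hη hderiv
  have hscaled := mul_le_mul_of_nonneg_left htangent hc.le
  rw [mul_add, ← mul_assoc, mul_one_div_cancel hc.ne', one_mul] at hscaled
  simp only
  linarith

/-- If `c μ'(0) ≤ 1`, the tangent line at `0` bounds `η − c μ(η)` on `η < η_c` by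
`(1 − c μ'(0)) η_c − c μ(0)`, which the assumption on `β` puts strictly below `β`. -/
theorem one_div_lt_deriv_zero (hconv : ConvexOn ℝ (Iio ηc) μ) (hηc : 0 < ηc)
    (hderiv : HasDerivAt μ (μ' 0) 0) (hpos : 0 < μ' 0) (hc : 0 < c)
    (hβ : max ηc (-μ 0 / μ' 0) < β) (hlub : IsLUB ((fun η => η - c * μ η) '' Iio ηc) β) :
    1 / c < μ' 0 := by
  by_contra! hle
  have hk : c * μ' 0 ≤ 1 := by rwa [le_div_iff₀ hc, mul_comm] at hle
  have hβηc : ηc < β := (le_max_left _ _).trans_lt hβ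
  have hβμ : -μ 0 < β * μ' 0 := by
    rw [← div_lt_iff₀ hpos]; exact (le_max_right _ _).trans_lt hβ
  have hbound : β ≤ (1 - c * μ' 0) * ηc - c * μ 0 := by
    refine hlub.2 ?_
    rintro _ ⟨η, hη, rfl⟩
    have htangent := hconv.add_mul_sub_le_of_hasDerivAt hηc hη hderiv
    have hη' : η < ηc := hη
    nlinarith [mul_le_mul_of_nonneg_left htangent hc.le,
      mul_le_mul_of_nonneg_right hk (sub_nonneg.2 hη'.le)]
  nlinarith [mul_lt_mul_of_pos_left hβμ hc, mul_le_mul_of_nonneg_right hk (sub_nonneg.2 hβηc.le)]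

theorem isLeast_div_of_isGreatest (hμ : ∀ η < 0, μ η < 0)
    (hβ : IsGreatest ((fun η => η - c * μ η) '' Iio 0) β) :
    IsLeast ((fun l : ℝ => (l + β) / (-μ (-l))) '' Ioi 0) c := by
  obtain ⟨⟨ηs, hηs, hβeq⟩, hub⟩ := hβ
  have hηs' : ηs < 0 := hηs
  constructor
  · refine ⟨-ηs, neg_pos.2 hηs', ?_⟩
    simp only [neg_neg]
    rw [div_eq_iff (neg_pos.2 (hμ ηs hηs')).ne', ← hβeq]
    ring
  · rintro _ ⟨l, hl, rfl⟩
    have hl' : 0 < l := hl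
    have hg := hub (mem_image_of_mem _ (neg_lt_zero.2 hl'))
    rw [le_div_iff₀ (neg_pos.2 (hμ _ (neg_lt_zero.2 hl')))]
    linarith

end Speed

theorem stmt11_general (μ μ' : ℝ → ℝ) (ηc : ℝ) (hηc : 0 < ηc)
    (hconv : ConvexOn ℝ (Set.Iio ηc) μ)
    (hderiv : ∀ η < ηc, HasDerivAt μ (μ' η) η)
    (hcont : ContinuousOn μ' (Set.Iio ηc))
    (hpos : ∀ η < ηc, 0 < μ' η)
    (hlim0 : Tendsto μ' atBot (nhds 0))
    (hμ0 : μ 0 ≤ 0)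
    (β : ℝ) (hβ : max ηc (-μ 0 / μ' 0) < β)
    (cstar : ℝ) (hcstar : 0 < cstar)
    (heq : cstar * legendreI μ ηc (1 / cstar) = β) :
    (∀ l : ℝ, 0 < l → 0 < -μ (-l)) ∧
    cstar = sInf ((fun l : ℝ => (l + β) / (-μ (-l))) '' Set.Ioi 0) := by
  have hμneg : ∀ η < 0, μ η < 0 := fun η hη =>
    (hconv.lt_of_hasDerivAt_pos (hη.trans hηc) hηc hη (hderiv η (hη.trans hηc))
      (hpos η (hη.trans hηc))).trans_le hμ0
  refine ⟨fun l hl => neg_pos.2 (hμneg _ (neg_lt_zero.2 hl)), ?_⟩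
  have hlub := isLUB_of_mul_legendreI_eq ⟨0, hηc⟩ hcstar
    (hηc.trans ((le_max_left _ _).trans_lt hβ)) heq
  obtain ⟨ηs, hηs, hμ'ηs⟩ := exists_lt_zero_eq_of_tendsto_atBot
    (hcont.mono fun _ hη => lt_of_le_of_lt hη hηc) hlim0 (one_div_pos.2 hcstar)
    (one_div_lt_deriv_zero hconv hηc (hderiv 0 hηc) (hpos 0 hηc) hcstar hβ hlub)
  have hmax := isGreatest_sub_mul_of_deriv_eq hconv (hηs.trans hηc)
    (hμ'ηs ▸ hderiv ηs (hηs.trans hηc)) hcstar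
  have hβeq : ηs - cstar * μ ηs = β := hmax.isLUB.unique hlub
  have hgreatest : IsGreatest ((fun η => η - cstar * μ η) '' Iio 0) β :=
    ⟨hβeq ▸ mem_image_of_mem _ hηs,
      upperBounds_mono_set (image_mono fun _ hη => lt_trans hη hηc) hlub.1⟩
  exact (isLeast_div_of_isGreatest hμneg hgreatest).csInf_eq.symm

/-- If `β > max(η_c, −μ(0)/μ'(0))` and `c*` is the unique positive solution of
`c*·I(1/c*) = β`, then `−μ(−λ) > 0` for every `λ > 0` and `c*` admits the variational
representation `c* = inf_{λ > 0} (λ + β)/(−μ(−λ))`. -/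
theorem stmt11 (μ μ' : ℝ → ℝ) (ηc : ℝ) (hηc : 0 < ηc)
    (hconv : ConvexOn ℝ (Set.Iio ηc) μ)
    (hderiv : ∀ η < ηc, HasDerivAt μ (μ' η) η)
    (hcont : ContinuousOn μ' (Set.Iio ηc))
    (hpos : ∀ η < ηc, 0 < μ' η)
    (hmono : StrictMonoOn μ' (Set.Iio ηc))
    (hlim0 : Tendsto μ' atBot (nhds 0))
    (hμ0 : μ 0 ≤ 0)
    (hμbot : Tendsto μ atBot atBot)
    (β : ℝ) (hβ : max ηc (-μ 0 / μ' 0) < β)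
    (cstar : ℝ) (hcstar : 0 < cstar)
    (heq : cstar * legendreI μ ηc (1 / cstar) = β)
    (huniq : ∀ c, 0 < c → c * legendreI μ ηc (1 / c) = β → c = cstar) :
    (∀ l : ℝ, 0 < l → 0 < -μ (-l)) ∧
    cstar = sInf ((fun l : ℝ => (l + β) / (-μ (-l))) '' Set.Ioi 0) :=
  stmt11_general μ μ' ηc hηc hconv hderiv hcont hpos hlim0 hμ0 β hβ cstar hcstar heq
end

section
/- For every fixed ℓ > 0 and β > 0, the speed function satisfies lim_{p→1⁻} c*(β, p, ℓ) = 0; that is, the wave speed on the constant-degree tree tends to zero as the degree d = 1/(1−p) tends to infinity with the reaction rate held fixed. -/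
/-!
Every quotient in the infimum defining `c*` is nonnegative, because the argument of the logarithm
is at least `1` whenever `γ ≥ 1` and `p ≥ 1/2`. At `λ = 0` we have `γ = 1`, the square root
collapses to `2(2p - 1)`, and the quotient equals `βℓ / log (p / (1 - p))`, which tends to `0`
as `p → 1⁻`. So `c*` is squeezed between `0` and a bound tending to `0`.
-/

open Real Set Filter

/-- `γ(λ) = e^{ℓ√(2λ)}`. -/
noncomputable def treeGamma (ℓ lam : ℝ) : ℝ := Real.exp (ℓ * Real.sqrt (2 * lam))

/-- The constant-`(d,ℓ)` tree speed function
`c*(β,p,ℓ) = inf_{λ ≥ 0} (λ+β)/(√(2λ) + (1/ℓ)·ln(4p/(1+γ(λ)² − √((γ(λ)²−1)² + 4(2p−1)²γ(λ)²))))`. -/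
noncomputable def cstarConst (β p ℓ : ℝ) : ℝ :=
  sInf ((fun lam : ℝ => (lam + β) /
    (Real.sqrt (2 * lam) + (1 / ℓ) * Real.log (4 * p /
      (1 + treeGamma ℓ lam ^ 2 -
        Real.sqrt ((treeGamma ℓ lam ^ 2 - 1) ^ 2 +
          4 * (2 * p - 1) ^ 2 * treeGamma ℓ lam ^ 2))))) '' Set.Ici 0)

open Topology

noncomputable def treeLogArg (p g : ℝ) : ℝ :=
  4 * p / (1 + g - √((g - 1) ^ 2 + 4 * (2 * p - 1) ^ 2 * g))

noncomputable def speedQuotient (β p ℓ lam : ℝ) : ℝ :=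
  (lam + β) / (√(2 * lam) + (1 / ℓ) * log (treeLogArg p (treeGamma ℓ lam ^ 2)))

theorem cstarConst_eq_sInf (β p ℓ : ℝ) :
    cstarConst β p ℓ = sInf (speedQuotient β p ℓ '' Ici 0) := rfl

theorem one_le_treeGamma {ℓ : ℝ} (hℓ : 0 ≤ ℓ) (lam : ℝ) : 1 ≤ treeGamma ℓ lam :=
  one_le_exp (mul_nonneg hℓ (sqrt_nonneg _))

theorem treeGamma_zero (ℓ : ℝ) : treeGamma ℓ 0 = 1 := by
  simp [treeGamma]

theorem one_le_treeLogArg {p g : ℝ} (hp₁ : 1 / 2 ≤ p) (hp₂ : p < 1) (hg : 1 ≤ g) :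
    1 ≤ treeLogArg p g := by
  set K := (g - 1) ^ 2 + 4 * (2 * p - 1) ^ 2 * g with hK
  have h_sqrt_lt : √K < g + 1 := by
    have h_gap : (g + 1) ^ 2 - K = 16 * g * p * (1 - p) := by rw [hK]; ring
    rw [sqrt_lt' (by linarith)]
    linarith [mul_pos (mul_pos (by linarith : (0 : ℝ) < g) (by linarith : (0 : ℝ) < p))
      (sub_pos.2 hp₂)]
  have h_le_sqrt : 1 + g - 4 * p ≤ √K := by
    have h_gap : K - (1 + g - 4 * p) ^ 2 = 8 * p * (g - 1) * (2 * p - 1) := by rw [hK]; ring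
    refine (le_abs_self _).trans (abs_le_sqrt ?_)
    linarith [mul_nonneg (mul_nonneg (by linarith : (0 : ℝ) ≤ p) (sub_nonneg.2 hg))
      (by linarith : (0 : ℝ) ≤ 2 * p - 1)]
  rw [treeLogArg, le_div_iff₀ (by linarith)]
  linarith

theorem treeLogArg_one {p : ℝ} (hp₁ : 1 / 2 ≤ p) (hp₂ : p < 1) :
    treeLogArg p 1 = p / (1 - p) := by
  have h_sqrt : √((1 - 1) ^ 2 + 4 * (2 * p - 1) ^ 2 * 1 : ℝ) = 2 * (2 * p - 1) := by
    rw [show ((1 : ℝ) - 1) ^ 2 + 4 * (2 * p - 1) ^ 2 * 1 = (2 * (2 * p - 1)) ^ 2 by ring]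
    exact sqrt_sq (by linarith)
  rw [treeLogArg, h_sqrt, div_eq_div_iff (by linarith) (by linarith)]
  ring

theorem speedQuotient_nonneg {β p ℓ lam : ℝ} (hβ : 0 ≤ β) (hp₁ : 1 / 2 ≤ p) (hp₂ : p < 1)
    (hℓ : 0 ≤ ℓ) (hlam : 0 ≤ lam) : 0 ≤ speedQuotient β p ℓ lam := by
  have h_log : 0 ≤ log (treeLogArg p (treeGamma ℓ lam ^ 2)) :=
    log_nonneg (one_le_treeLogArg hp₁ hp₂ (one_le_pow₀ (one_le_treeGamma hℓ lam)))
  unfold speedQuotient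
  positivity

theorem speedQuotient_zero {β p ℓ : ℝ} (hp₁ : 1 / 2 ≤ p) (hp₂ : p < 1) :
    speedQuotient β p ℓ 0 = β * ℓ / log (p / (1 - p)) := by
  rw [speedQuotient, treeGamma_zero, one_pow, treeLogArg_one hp₁ hp₂]
  simp only [mul_zero, sqrt_zero, zero_add, one_div_mul_eq_div, div_div_eq_mul_div]

theorem cstarConst_nonneg {β p ℓ : ℝ} (hβ : 0 ≤ β) (hp₁ : 1 / 2 ≤ p) (hp₂ : p < 1)
    (hℓ : 0 ≤ ℓ) : 0 ≤ cstarConst β p ℓ := by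
  rw [cstarConst_eq_sInf]
  refine sInf_nonneg ?_
  rintro _ ⟨lam, hlam, rfl⟩
  exact speedQuotient_nonneg hβ hp₁ hp₂ hℓ hlam

theorem cstarConst_le_speedQuotient {β p ℓ lam : ℝ} (hβ : 0 ≤ β) (hp₁ : 1 / 2 ≤ p)
    (hp₂ : p < 1) (hℓ : 0 ≤ ℓ) (hlam : 0 ≤ lam) :
    cstarConst β p ℓ ≤ speedQuotient β p ℓ lam := by
  rw [cstarConst_eq_sInf]
  refine csInf_le ⟨0, ?_⟩ (mem_image_of_mem _ hlam)
  rintro _ ⟨lam', hlam', rfl⟩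
  exact speedQuotient_nonneg hβ hp₁ hp₂ hℓ hlam'

theorem tendsto_log_div_one_sub_atTop :
    Tendsto (fun p : ℝ => log (p / (1 - p))) (𝓝[<] 1) atTop := by
  have h_gap : Tendsto (fun p : ℝ => 1 - p) (𝓝[<] 1) (𝓝[>] 0) := by
    refine tendsto_nhdsWithin_iff.2 ⟨?_, ?_⟩
    · simpa using ((continuous_sub_left (1 : ℝ)).tendsto 1).mono_left nhdsWithin_le_nhds
    · filter_upwards [self_mem_nhdsWithin] with p hp using sub_pos.2 (mem_Iio.1 hp)
  have h_id : Tendsto (fun p : ℝ => p) (𝓝[<] 1) (𝓝 1) :=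
    tendsto_nhdsWithin_of_tendsto_nhds tendsto_id
  exact tendsto_log_atTop.comp
    (h_id.pos_mul_atTop one_pos (tendsto_inv_nhdsGT_zero.comp h_gap))

/-- For fixed `ℓ > 0` and `β > 0`, `c*(β,p,ℓ) → 0` as `p → 1⁻` (i.e. as the degree
`d = 1/(1−p)` of the constant tree tends to infinity with the reaction rate fixed). -/
theorem stmt15 (ℓ β : ℝ) (hℓ : 0 < ℓ) (hβ : 0 < β) :
    Tendsto (fun p : ℝ => cstarConst β p ℓ)
      (nhdsWithin 1 (Set.Ioo (1 / 2 : ℝ) 1)) (nhds 0) := by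
  have h_bound : Tendsto (fun p : ℝ => β * ℓ / log (p / (1 - p)))
      (𝓝[Ioo (1 / 2) 1] 1) (𝓝 0) :=
    tendsto_const_nhds.div_atTop
      (tendsto_log_div_one_sub_atTop.mono_left (nhdsWithin_mono _ Ioo_subset_Iio_self))
  have h_mem : ∀ᶠ p in 𝓝[Ioo (1 / 2) 1] (1 : ℝ), p ∈ Ioo (1 / 2 : ℝ) 1 :=
    self_mem_nhdsWithin
  refine squeeze_zero' ?_ ?_ h_bound
  · filter_upwards [h_mem] with p hp
    exact cstarConst_nonneg hβ.le hp.1.le hp.2 hℓ.le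
  · filter_upwards [h_mem] with p hp
    rw [← speedQuotient_zero hp.1.le hp.2]
    exact cstarConst_le_speedQuotient hβ.le hp.1.le hp.2 hℓ.le le_rfl
end
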